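/- arXiv:1511.02804 — 6 statements merged into one kernel-verified Lean document; each statement's English description precedes it below -/
import Mathlib

section
/- For every partition λ, the sum over all boxes of λ of the square of the hook length minus the sum over all boxes of the square of the content equals the square of the size of λ, i.e., Σ_{□∈λ} h_□² − Σ_{□∈λ} c_□² = |λ|². -/
open Finset

namespace PaperDefs

/-- Hook length of the box in row `i`, column `j` (0-indexed) of `μ`. -/
def hookLen (μ : YoungDiagram) (i j : ℕ) : ℕ :=
  (μ.rowLen i - j) + (μ.colLen j - i) - 1

/-- Content of a box. -/
def content (c : ℕ × ℕ) : ℤ := (c.2 : ℤ) - (c.1 : ℤ)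

/-- `z_i = 1` (horizontal edge) in the 01-sequence of `μ`; the 0's (vertical
edges) occur exactly at the positions `λ_{r+1} - (r+1) = rowLen r - (r+1)`,
which realizes the normalization `#{i ≥ 0 : z_i = 0} = #{i < 0 : z_i = 1}`. -/
def ZOne (μ : YoungDiagram) (i : ℤ) : Prop :=
  ∀ r : ℕ, i ≠ (μ.rowLen r : ℤ) - (r + 1)

/-- `μ` is a `t`-core: no hook length is divisible by `t`. -/
def IsTCore (t : ℕ) (μ : YoungDiagram) : Prop :=
  ∀ c ∈ μ.cells, ¬ (t ∣ hookLen μ c.1 c.2)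

/-- `ν` is obtained from `μ` by adding one `t`-hook: a pair
`(z_i, z_{i+t}) = (0, 1)` of the 01-sequence of `μ` is exchanged to `(1, 0)`. -/
def AddHook (t : ℕ) (μ ν : YoungDiagram) : Prop :=
  ∃ i : ℤ, ¬ ZOne μ i ∧ ZOne μ (i + (t : ℤ)) ∧
    (∀ j : ℤ, ZOne ν j ↔ (j = i ∨ (j ≠ i + (t : ℤ) ∧ ZOne μ j)))

/-- `lam ≥_t μ` : `lam` is obtained from `μ` by successively adding `t`-hooks. -/
def GEt (t : ℕ) (μ lam : YoungDiagram) : Prop :=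
  Relation.ReflTransGen (AddHook t) μ lam

/-- Number of saturated chains of `n` successive `t`-hook additions from `μ` to
`lam`; this equals `F_{λ/μ}` when `|λ/μ| = nt` and vanishes otherwise. -/
noncomputable def numChains (t n : ℕ) (μ lam : YoungDiagram) : ℕ :=
  Set.ncard {c : ℕ → YoungDiagram |
    c 0 = μ ∧ c n = lam ∧ ∀ k < n, AddHook t (c k) (c (k + 1))}

/-- `H_μ`, the product of all hook lengths of `μ`. -/
def Hprod (μ : YoungDiagram) : ℚ :=
  ∏ c ∈ μ.cells, (hookLen μ c.1 c.2 : ℚ)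

/-- `G_μ = 1 / ∏_{h ∈ 𝓗_t(μ)} h`. -/
def Gfun (t : ℕ) (μ : YoungDiagram) : ℚ :=
  1 / ∏ c ∈ μ.cells.filter (fun c => t ∣ hookLen μ c.1 c.2), (hookLen μ c.1 c.2 : ℚ)

/-- The `t`-difference operator `D_t`. -/
noncomputable def Dt (t : ℕ) (g : YoungDiagram → ℚ) (μ : YoungDiagram) : ℚ :=
  (∑ᶠ ν ∈ {ν : YoungDiagram | AddHook t μ ν}, g ν) - g μ

/-- `P_g(n) = Σ_{λ ≥_t μ, |λ/μ| = nt} F_{λ/μ} g(λ)`. -/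
noncomputable def Pg (t : ℕ) (μ : YoungDiagram) (g : YoungDiagram → ℚ) (n : ℕ) : ℚ :=
  ∑ᶠ lam : YoungDiagram, (numChains t n μ lam : ℚ) * g lam

/-- `ν` is obtained from `μ` by adding a single box. -/
def AddBox (μ ν : YoungDiagram) : Prop :=
  ∃ cell : ℕ × ℕ, cell ∉ μ.cells ∧ ν.cells = insert cell μ.cells

/-- `ν` is obtained from `μ` by adding a single box of content `k`. -/
def AddBoxAt (μ ν : YoungDiagram) (k : ℤ) : Prop :=
  ∃ cell : ℕ × ℕ, cell ∉ μ.cells ∧ ν.cells = insert cell μ.cells ∧ content cell = k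

/-- `μ` has an inner corner of content `k` (a box of content `k` can be added). -/
def InnerCorner (μ : YoungDiagram) (k : ℤ) : Prop :=
  ∃ ν : YoungDiagram, AddBoxAt μ ν k

/-- `μ` has an outer corner of content `k` (a box of content `k` can be removed). -/
def OuterCorner (μ : YoungDiagram) (k : ℤ) : Prop :=
  ∃ ν : YoungDiagram, AddBoxAt ν μ k

/-- `x 0 < x 1 < ⋯ < x m` are the contents of the inner corners of `μ` and
`y 1 < ⋯ < y m` those of the outer corners. -/
def CornerData (μ : YoungDiagram) (m : ℕ) (x y : ℕ → ℤ) : Prop :=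
  (∀ k : ℤ, InnerCorner μ k ↔ ∃ i ≤ m, x i = k) ∧
  (∀ k : ℤ, OuterCorner μ k ↔ ∃ j, 1 ≤ j ∧ j ≤ m ∧ y j = k) ∧
  (∀ i j, i < j → j ≤ m → x i < x j) ∧
  (∀ i j, 1 ≤ i → i < j → j ≤ m → y i < y j)

/-- `q_k = Σ_{i=0}^m x_i^k − Σ_{j=1}^m y_j^k`. -/
def qPow (m : ℕ) (x y : ℕ → ℤ) (k : ℕ) : ℤ :=
  (∑ i ∈ range (m + 1), x i ^ k) - ∑ j ∈ range m, y (j + 1) ^ k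

/-- Size of the `i`-th `t`-quotient of `lam`: boxes of `λ^i` correspond to
pairs `i' < j'` with `i' ≡ j' ≡ i (mod t)`, `z_{i'} = 1`, `z_{j'} = 0`. -/
noncomputable def quotientSize (t : ℕ) (lam : YoungDiagram) (i : ℕ) : ℕ :=
  Set.ncard {p : ℤ × ℤ | p.1 < p.2 ∧ p.1 % (t : ℤ) = (i : ℤ) ∧ p.2 % (t : ℤ) = (i : ℤ) ∧
    ZOne lam p.1 ∧ ¬ ZOne lam p.2}

/-- The multiset of contents of the boxes of `μ`. -/
def contentsMultiset (μ : YoungDiagram) : Multiset ℤ :=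
  μ.cells.val.map content

/-- The number of standard Young tableaux of shape `μ`, given by the
hook length formula `f_μ = |μ|! / H_μ`. -/
def fSYT (μ : YoungDiagram) : ℚ :=
  (Nat.factorial μ.card : ℚ) / Hprod μ

end PaperDefs

open PaperDefs

/-!
Write the hook length of the cell `(i, j)` as `a + l + 1` (arm plus leg plus one) and its content
as `j - i`. Reflecting each row shows that `a` and `j` are equidistributed over the cells, and
reflecting each column does the same for `l` and `i`; hence
`Σ h² - Σ c² = Σ (2 (i + 1) (j + 1) + 2 a l - 1)`. Now `(i + 1) (j + 1)` counts the cells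
`u ≤ (i, j)`, while `a l` counts the pairs `(u, v)` with `u` in the arm and `v` in the leg of
`(i, j)`, i.e. the incomparable pairs with `u` north-east of `v`, indexed by their corner
`(u.1, v.2)`. Every ordered pair of cells is either comparable or incomparable, so
`2 Σ ((i + 1) (j + 1) + a l) = n² + n`.
-/

namespace Finset

lemma card_sq_add_card_eq_two_mul {α β : Type*} [LinearOrder α] [LinearOrder β]
    (s : Finset (α × β)) :
    #s ^ 2 + #s = 2 * (#{p ∈ s ×ˢ s | p.1 ≤ p.2} +
      #{p ∈ s ×ˢ s | p.1.1 < p.2.1 ∧ p.2.2 < p.1.2}) := by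
  have comparable_or_incomparable (u v : α × β) :
      ((if u ≤ v then 1 else 0) + (if v ≤ u then 1 else 0) +
        (if u.1 < v.1 ∧ v.2 < u.2 then 1 else 0) +
        (if v.1 < u.1 ∧ u.2 < v.2 then 1 else 0) : ℕ)
        = 1 + if u = v then 1 else 0 := by
    simp only [Prod.le_def, Prod.ext_iff]
    split_ifs <;> grind
  calc #s ^ 2 + #s = ∑ u ∈ s, ∑ v ∈ s, (1 + if u = v then 1 else 0) := by
        simp [sum_add_distrib, sq]
    _ = _ := by
        simp only [← comparable_or_incomparable, sum_add_distrib, card_filter, sum_product]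
        rw [sum_comm (f := fun u v : α × β => if v ≤ u then 1 else 0),
          sum_comm (f := fun u v : α × β => if v.1 < u.1 ∧ u.2 < v.2 then 1 else 0)]
        ring

end Finset

namespace YoungDiagram

def armLen (μ : YoungDiagram) (c : ℕ × ℕ) : ℕ := μ.rowLen c.1 - c.2 - 1

def legLen (μ : YoungDiagram) (c : ℕ × ℕ) : ℕ := μ.colLen c.2 - c.1 - 1

variable (μ : YoungDiagram)

lemma hookLen_eq_armLen_add_legLen_add_one {c : ℕ × ℕ} (hc : c ∈ μ) :
    hookLen μ c.1 c.2 = μ.armLen c + μ.legLen c + 1 := by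
  have hrow := mem_iff_lt_rowLen.mp hc
  have hcol := mem_iff_lt_colLen.mp hc
  unfold hookLen armLen legLen
  omega

lemma sum_armLen {M : Type*} [AddCommMonoid M] (f : ℕ → M) :
    ∑ c ∈ μ.cells, f (μ.armLen c) = ∑ c ∈ μ.cells, f c.2 := by
  refine sum_nbij' (fun c => (c.1, μ.armLen c)) (fun c => (c.1, μ.armLen c)) ?_ ?_ ?_ ?_ ?_ <;>
    simp only [Prod.forall, mem_cells, mem_iff_lt_rowLen, armLen, Prod.mk.injEq, true_and,
      implies_true] <;> intros <;> omega

lemma sum_legLen {M : Type*} [AddCommMonoid M] (f : ℕ → M) :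
    ∑ c ∈ μ.cells, f (μ.legLen c) = ∑ c ∈ μ.cells, f c.1 := by
  refine sum_nbij' (fun c => (μ.legLen c, c.2)) (fun c => (μ.legLen c, c.2)) ?_ ?_ ?_ ?_ ?_ <;>
    simp only [Prod.forall, mem_cells, mem_iff_lt_colLen, legLen, Prod.mk.injEq, and_true,
      implies_true] <;> intros <;> omega

lemma filter_cells_le_eq_Iic {v : ℕ × ℕ} (hv : v ∈ μ.cells) :
    {u ∈ μ.cells | u ≤ v} = Iic v := by
  ext u
  simp only [mem_filter, mem_Iic, and_iff_right_iff_imp]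
  exact fun h => μ.isLowerSet h hv

lemma card_filter_le_eq_sum :
    #{p ∈ μ.cells ×ˢ μ.cells | p.1 ≤ p.2} = ∑ v ∈ μ.cells, (v.1 + 1) * (v.2 + 1) := by
  rw [card_filter, sum_product_right]
  refine sum_congr rfl fun v hv => ?_
  rw [← card_filter, μ.filter_cells_le_eq_Iic hv, card_Iic_prod, Nat.card_Iic, Nat.card_Iic]

lemma card_incomparable_eq_sum_armLen_mul_legLen :
    #{p ∈ μ.cells ×ˢ μ.cells | p.1.1 < p.2.1 ∧ p.2.2 < p.1.2}
      = ∑ w ∈ μ.cells, μ.armLen w * μ.legLen w := by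
  rw [card_eq_sum_card_fiberwise (f := fun p => (p.1.1, p.2.2)) (t := μ.cells)]
  · refine sum_congr rfl fun w hw => ?_
    rw [armLen, legLen, ← Nat.card_Ioo, ← Nat.card_Ioo, ← card_product]
    refine card_nbij' (fun p => (p.1.2, p.2.1)) (fun q => ((w.1, q.1), (q.2, w.2))) ?_ ?_ ?_ ?_ <;>
      simp [Set.MapsTo, Set.LeftInvOn, Set.RightInvOn] <;>
      grind [mem_iff_lt_rowLen, mem_iff_lt_colLen]
  · intro p hp
    simp only [coe_filter, mem_product, Set.mem_ofPred_eq, mem_coe, mem_cells] at hp ⊢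
    exact μ.up_left_mem le_rfl hp.2.2.le hp.1.1

lemma two_mul_sum_eq_card_sq_add_card :
    2 * ∑ c ∈ μ.cells, ((c.1 + 1) * (c.2 + 1) + μ.armLen c * μ.legLen c) =
      μ.card ^ 2 + μ.card := by
  rw [sum_add_distrib, ← card_filter_le_eq_sum, ← card_incomparable_eq_sum_armLen_mul_legLen,
    card_sq_add_card_eq_two_mul]

end YoungDiagram

theorem stmt0 (μ : YoungDiagram) :
    (∑ c ∈ μ.cells, (hookLen μ c.1 c.2 : ℤ) ^ 2) - (∑ c ∈ μ.cells, (content c) ^ 2)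
      = (μ.card : ℤ) ^ 2 := by
  have expand : ∀ c ∈ μ.cells, (hookLen μ c.1 c.2 : ℤ) ^ 2 - content c ^ 2 =
      (((μ.armLen c : ℤ) ^ 2 + 2 * μ.armLen c) - ((c.2 : ℤ) ^ 2 + 2 * c.2)) +
      (((μ.legLen c : ℤ) ^ 2 + 2 * μ.legLen c) - ((c.1 : ℤ) ^ 2 + 2 * c.1)) +
      (2 * (((c.1 + 1) * (c.2 + 1) + μ.armLen c * μ.legLen c : ℕ) : ℤ) - 1) := by
    intro c hc
    rw [μ.hookLen_eq_armLen_add_legLen_add_one hc, content]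
    push_cast
    ring
  have count :
      2 * ∑ c ∈ μ.cells, (((c.1 + 1) * (c.2 + 1) + μ.armLen c * μ.legLen c : ℕ) : ℤ) =
        (μ.card : ℤ) ^ 2 + μ.card :=
    mod_cast μ.two_mul_sum_eq_card_sq_add_card
  rw [← sum_sub_distrib, sum_congr rfl expand, sum_add_distrib, sum_add_distrib, sum_sub_distrib,
    sum_sub_distrib, sum_sub_distrib, μ.sum_armLen (fun a => (a : ℤ) ^ 2 + 2 * a),
    μ.sum_legLen (fun l => (l : ℤ) ^ 2 + 2 * l), ← mul_sum, sum_const, count]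
  simp
end

section
/- Let λ be a partition with inner corner contents x_0 < x_1 < ⋯ < x_m and outer corner contents y_1 < ⋯ < y_m. Define q_k(λ) = Σ_{i=0}^{m} x_i^k − Σ_{j=1}^{m} y_j^k. Then q_0(λ) = 1, q_1(λ) = 0, and q_2(λ) = 2|λ|. -/
open Finset

open PaperDefs

/-!
Write `λ_i` for the length of row `i`, `ℓ` for the number of rows and `e_i = λ_i - i` for the
content of the first cell to the right of row `i`. The inner corners sit at the ends of row `0`
and of every row `i + 1` with `λ_{i+1} < λ_i`, with contents `e_0` and `e_{i+1}`; the outer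
corners sit at the ends of the rows `i` with `λ_{i+1} < λ_i`, with contents `e_i - 1`. Hence
for every `f`, `∑ f(x_i) - ∑ f(y_j) = f(e_0) + ∑_{i < ℓ} (f(e_{i+1}) - f(e_i - 1))`, since a
row with `λ_{i+1} = λ_i` has `e_{i+1} = e_i - 1`; telescoping, this is
`f(-ℓ) + ∑_{i < ℓ} (f(e_i) - f(e_i - 1))`. For `f = 1, z, z²` this is `1`, `-ℓ + ℓ = 0` and
`ℓ² + ∑_{i < ℓ} (2λ_i - 2i - 1) = 2|λ|`.
-/

namespace YoungDiagram

variable {μ : YoungDiagram}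

theorem exists_cells_eq_insert_iff {c : ℕ × ℕ} :
    (∃ ν : YoungDiagram, ν.cells = insert c μ.cells) ↔ ∀ d < c, d ∈ μ := by
  constructor
  · rintro ⟨ν, hν⟩ d hd
    have hdν : d ∈ ν := ν.isLowerSet hd.le (by simp [hν])
    rw [← mem_cells, hν, Finset.mem_insert] at hdν
    exact (mem_cells d).1 (hdν.resolve_left hd.ne)
  · intro h
    refine ⟨⟨insert c μ.cells, fun a b hba ha => ?_⟩, rfl⟩
    simp only [Finset.coe_insert, Set.mem_insert_iff, Finset.mem_coe, mem_cells] at ha ⊢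
    rcases ha with rfl | ha
    · exact hba.eq_or_lt.imp id (h b)
    · exact Or.inr (μ.isLowerSet hba ha)

theorem exists_insert_cells_eq_iff {c : ℕ × ℕ} :
    (∃ ν : YoungDiagram, c ∉ ν ∧ μ.cells = insert c ν.cells) ↔ c ∈ μ ∧ ∀ d ∈ μ, ¬ c < d := by
  constructor
  · rintro ⟨ν, hcν, hμ⟩
    refine ⟨by simp [← mem_cells, hμ], fun d hd hcd => hcν (ν.isLowerSet hcd.le ?_)⟩
    rw [← mem_cells, hμ, Finset.mem_insert] at hd
    exact (mem_cells d).1 (hd.resolve_left hcd.ne')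
  · rintro ⟨hc, hmax⟩
    have hls : IsLowerSet (μ.cells.erase c : Set (ℕ × ℕ)) := by
      intro a b hba ha
      simp only [Finset.coe_erase, Set.mem_sdiff, Finset.mem_coe, mem_cells,
        Set.mem_singleton_iff] at ha ⊢
      refine ⟨μ.isLowerSet hba ha.1, fun hbc => ?_⟩
      subst hbc
      exact hmax a ha.1 (lt_of_le_of_ne hba (Ne.symm ha.2))
    exact ⟨⟨μ.cells.erase c, hls⟩, by simp, (Finset.insert_erase hc).symm⟩

theorem forall_lt_mem_iff {i j : ℕ} (h : (i, j) ∉ μ) :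
    (∀ d < (i, j), d ∈ μ) ↔ j = μ.rowLen i ∧ ∀ i' < i, μ.rowLen i < μ.rowLen i' := by
  have hj : μ.rowLen i ≤ j := not_lt.1 (mt mem_iff_lt_rowLen.2 h)
  constructor
  · intro hlt
    refine ⟨?_, fun i' hi' => ?_⟩
    · rcases Nat.eq_zero_or_pos j with rfl | hpos
      · omega
      · have := mem_iff_lt_rowLen.1 (hlt (i, j - 1) (Prod.lt_iff.2 (Or.inr ⟨le_rfl, by omega⟩)))
        omega
    · exact hj.trans_lt (mem_iff_lt_rowLen.1 (hlt (i', j) (Prod.lt_iff.2 (Or.inl ⟨hi', le_rfl⟩))))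
  · rintro ⟨rfl, hrows⟩ ⟨a, b⟩ hab
    rw [mem_iff_lt_rowLen]
    rcases Prod.lt_iff.1 hab with ⟨ha, hb⟩ | ⟨ha, hb⟩
    · exact hb.trans_lt (hrows a ha)
    · exact hb.trans_le (μ.rowLen_anti a i ha)

theorem forall_mem_not_lt_iff {i j : ℕ} (h : (i, j) ∈ μ) :
    (∀ d ∈ μ, ¬ (i, j) < d) ↔ j + 1 = μ.rowLen i ∧ μ.rowLen (i + 1) ≤ j := by
  have hj : j < μ.rowLen i := mem_iff_lt_rowLen.1 h
  constructor
  · intro hmax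
    have hright := mt (hmax (i, j + 1)) (not_not.2 (Prod.lt_iff.2 (Or.inr ⟨le_rfl, by omega⟩)))
    have hbelow := mt (hmax (i + 1, j)) (not_not.2 (Prod.lt_iff.2 (Or.inl ⟨by omega, le_rfl⟩)))
    rw [mem_iff_lt_rowLen] at hright hbelow
    omega
  · rintro ⟨hlast, hnext⟩ ⟨a, b⟩ hab hlt
    have hb := mem_iff_lt_rowLen.1 hab
    rcases Prod.lt_iff.1 hlt with ⟨ha, hjb⟩ | ⟨ha, hjb⟩
    · have := μ.rowLen_anti (i + 1) a ha
      omega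
    · have := μ.rowLen_anti i a ha
      omega

theorem rowLen_colLen_zero (μ : YoungDiagram) : μ.rowLen (μ.colLen 0) = 0 := by
  by_contra hpos
  exact (mem_iff_lt_colLen.1 (mem_iff_lt_rowLen.2 (Nat.pos_of_ne_zero hpos))).false

def endContent (μ : YoungDiagram) (i : ℕ) : ℤ := (μ.rowLen i : ℤ) - i

theorem endContent_strictAnti (μ : YoungDiagram) : StrictAnti μ.endContent := by
  intro i j hij
  have := μ.rowLen_anti i j hij.le
  simp only [endContent]
  omega

theorem innerCorner_iff {k : ℤ} :
    InnerCorner μ k ↔ ∃ i, (∀ i' < i, μ.rowLen i < μ.rowLen i') ∧ k = μ.endContent i := by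
  constructor
  · rintro ⟨ν, ⟨i, j⟩, hc, hν, rfl⟩
    have hc : (i, j) ∉ μ := hc
    obtain ⟨rfl, hrows⟩ := (forall_lt_mem_iff hc).1 (exists_cells_eq_insert_iff.1 ⟨ν, hν⟩)
    exact ⟨i, hrows, rfl⟩
  · rintro ⟨i, hrows, rfl⟩
    have hc : (i, μ.rowLen i) ∉ μ := fun h => (mem_iff_lt_rowLen.1 h).false
    obtain ⟨ν, hν⟩ := exists_cells_eq_insert_iff.2 ((forall_lt_mem_iff hc).2 ⟨rfl, hrows⟩)
    exact ⟨ν, _, hc, hν, rfl⟩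

theorem outerCorner_iff {k : ℤ} :
    OuterCorner μ k ↔ ∃ i, μ.rowLen (i + 1) < μ.rowLen i ∧ k = μ.endContent i - 1 := by
  constructor
  · rintro ⟨ν, ⟨i, j⟩, hc, hμ, rfl⟩
    obtain ⟨hmem, hmax⟩ := exists_insert_cells_eq_iff.1 ⟨ν, hc, hμ⟩
    obtain ⟨hlast, hnext⟩ := (forall_mem_not_lt_iff hmem).1 hmax
    refine ⟨i, by omega, ?_⟩
    simp only [content, endContent]
    omega
  · rintro ⟨i, hdrop, rfl⟩
    have hmem : (i, μ.rowLen i - 1) ∈ μ := mem_iff_lt_rowLen.2 (by omega)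
    obtain ⟨ν, hc, hμ⟩ := exists_insert_cells_eq_iff.2
      ⟨hmem, (forall_mem_not_lt_iff hmem).2 ⟨by omega, by omega⟩⟩
    refine ⟨ν, _, hc, hμ, ?_⟩
    simp only [content, endContent]
    omega

def dropRows (μ : YoungDiagram) : Finset ℕ :=
  (range (μ.colLen 0)).filter fun i => μ.rowLen (i + 1) < μ.rowLen i

theorem mem_dropRows {i : ℕ} : i ∈ μ.dropRows ↔ μ.rowLen (i + 1) < μ.rowLen i := by
  refine ⟨fun h => (Finset.mem_filter.1 h).2, fun h => Finset.mem_filter.2 ⟨?_, h⟩⟩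
  exact Finset.mem_range.2 (mem_iff_lt_colLen.1 (mem_iff_lt_rowLen.2 (by omega)))

def innerContents (μ : YoungDiagram) : Finset ℤ :=
  insert (μ.endContent 0) (μ.dropRows.image fun i => μ.endContent (i + 1))

def outerContents (μ : YoungDiagram) : Finset ℤ :=
  μ.dropRows.image fun i => μ.endContent i - 1

theorem mem_innerContents {k : ℤ} : k ∈ μ.innerContents ↔ InnerCorner μ k := by
  rw [innerCorner_iff, innerContents, Finset.mem_insert, Finset.mem_image]
  constructor
  · rintro (rfl | ⟨i, hi, rfl⟩)
    · exact ⟨0, fun _ h => absurd h (Nat.not_lt_zero _), rfl⟩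
    · refine ⟨i + 1, fun i' hi' => ?_, rfl⟩
      exact (mem_dropRows.1 hi).trans_le (μ.rowLen_anti i' i (Nat.lt_succ_iff.1 hi'))
  · rintro ⟨_ | i, hrows, rfl⟩
    · exact Or.inl rfl
    · exact Or.inr ⟨i, mem_dropRows.2 (hrows i i.lt_succ_self), rfl⟩

theorem mem_outerContents {k : ℤ} : k ∈ μ.outerContents ↔ OuterCorner μ k := by
  simp only [outerCorner_iff, outerContents, Finset.mem_image, mem_dropRows, eq_comm (a := k)]

theorem sum_innerContents_sub_sum_outerContents (μ : YoungDiagram) {M : Type*} [AddCommGroup M]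
    (f : ℤ → M) :
    ∑ k ∈ μ.innerContents, f k - ∑ k ∈ μ.outerContents, f k =
      f (-(μ.colLen 0 : ℤ)) +
        ∑ i ∈ range (μ.colLen 0), (f (μ.endContent i) - f (μ.endContent i - 1)) := by
  set n := μ.colLen 0
  have hinj := μ.endContent_strictAnti.injective
  have hfirst : μ.endContent 0 ∉ μ.dropRows.image fun i => μ.endContent (i + 1) := by
    simp only [Finset.mem_image, not_exists, not_and]
    exact fun i _ h => (μ.endContent_strictAnti i.succ_pos).ne h
  have hflat : ∑ i ∈ μ.dropRows, (f (μ.endContent (i + 1)) - f (μ.endContent i - 1)) =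
      ∑ i ∈ range n, (f (μ.endContent (i + 1)) - f (μ.endContent i - 1)) := by
    refine Finset.sum_subset (Finset.filter_subset _ _) fun i _ hi => ?_
    have := μ.rowLen_anti i (i + 1) i.le_succ
    have heq : μ.rowLen (i + 1) = μ.rowLen i := by
      by_contra hne
      exact hi (mem_dropRows.2 (by omega))
    have hstep : μ.endContent (i + 1) = μ.endContent i - 1 := by
      simp only [endContent, heq]
      push_cast
      ring
    rw [hstep, sub_self]
  have hlast : μ.endContent n = -(n : ℤ) := by
    simp [endContent, n, rowLen_colLen_zero]
  rw [innerContents, outerContents, Finset.sum_insert hfirst,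
    Finset.sum_image fun i _ j _ h => Nat.succ_injective (hinj h),
    Finset.sum_image fun i _ j _ h => hinj (sub_left_injective h),
    add_sub_assoc, ← Finset.sum_sub_distrib, hflat, ← hlast]
  have hsplit : ∀ i ∈ range n, f (μ.endContent (i + 1)) - f (μ.endContent i - 1) =
      (f (μ.endContent (i + 1)) - f (μ.endContent i)) +
        (f (μ.endContent i) - f (μ.endContent i - 1)) := fun i _ => by abel
  rw [Finset.sum_congr rfl hsplit, Finset.sum_add_distrib,
    Finset.sum_range_sub (fun i => f (μ.endContent i))]
  abel

theorem card_eq_sum_rowLen (μ : YoungDiagram) :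
    μ.card = ∑ i ∈ range (μ.colLen 0), μ.rowLen i := by
  have hrows : (μ.cells : Set (ℕ × ℕ)).MapsTo Prod.fst (range (μ.colLen 0)) := fun c hc =>
    Finset.mem_range.2 ((mem_iff_lt_colLen.1 hc).trans_le (μ.colLen_anti 0 c.2 c.2.zero_le))
  rw [YoungDiagram.card, Finset.card_eq_sum_card_fiberwise hrows]
  exact Finset.sum_congr rfl fun i _ => μ.rowLen_eq_card.symm

theorem card_innerContents (μ : YoungDiagram) :
    #μ.innerContents = #μ.outerContents + 1 := by
  have h := μ.sum_innerContents_sub_sum_outerContents fun _ => (1 : ℤ)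
  simp only [Finset.sum_const, nsmul_eq_mul, mul_one, sub_self] at h
  omega

theorem sum_innerContents_eq_sum_outerContents (μ : YoungDiagram) :
    ∑ k ∈ μ.innerContents, k = ∑ k ∈ μ.outerContents, k := by
  rw [← sub_eq_zero, μ.sum_innerContents_sub_sum_outerContents fun k => k]
  simp

theorem sum_innerContents_sq_sub_sum_outerContents_sq (μ : YoungDiagram) :
    ∑ k ∈ μ.innerContents, k ^ 2 - ∑ k ∈ μ.outerContents, k ^ 2 = 2 * μ.card := by
  -- the `i`-dependent part telescopes to `ℓ²`, `ℓ` the number of rows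
  have hterm : ∀ i ∈ range (μ.colLen 0), μ.endContent i ^ 2 - (μ.endContent i - 1) ^ 2 =
      2 * (μ.rowLen i : ℤ) - (((i + 1 : ℕ) : ℤ) ^ 2 - (i : ℤ) ^ 2) := fun i _ => by
    simp only [endContent]
    push_cast
    ring
  rw [μ.sum_innerContents_sub_sum_outerContents fun k => k ^ 2, Finset.sum_congr rfl hterm,
    Finset.sum_sub_distrib, Finset.sum_range_sub (fun i => (i : ℤ) ^ 2), ← Finset.mul_sum,
    card_eq_sum_rowLen]
  push_cast
  ring

end YoungDiagram

theorem PaperDefs.CornerData.qPow_eq {μ : YoungDiagram} {m : ℕ} {x y : ℕ → ℤ}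
    (h : CornerData μ m x y) (k : ℕ) :
    qPow m x y k = ∑ c ∈ μ.innerContents, c ^ k - ∑ c ∈ μ.outerContents, c ^ k := by
  obtain ⟨hx, hy, hxm, hym⟩ := h
  have hinner : μ.innerContents = (range (m + 1)).image x := by
    ext k
    simp [YoungDiagram.mem_innerContents, hx]
  have houter : μ.outerContents = (range m).image fun j => y (j + 1) := by
    ext k
    rw [YoungDiagram.mem_outerContents, hy, Finset.mem_image]
    constructor
    · rintro ⟨j, hj1, hjm, rfl⟩
      exact ⟨j - 1, Finset.mem_range.2 (by omega), by rw [Nat.sub_add_cancel hj1]⟩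
    · rintro ⟨j, hj, rfl⟩
      exact ⟨j + 1, Nat.le_add_left 1 j, Finset.mem_range.1 hj, rfl⟩
  have hxinj : Set.InjOn x (range (m + 1)) := StrictMonoOn.injOn fun i _ j hj hij =>
    hxm i j hij (Nat.lt_succ_iff.1 (Finset.mem_range.1 hj))
  have hyinj : Set.InjOn (fun j => y (j + 1)) (range m) := StrictMonoOn.injOn fun i _ j hj hij =>
    hym _ _ (by omega) (by omega) (Finset.mem_range.1 hj)
  rw [qPow, hinner, houter, Finset.sum_image hxinj, Finset.sum_image hyinj]

theorem stmt4 (μ : YoungDiagram) (m : ℕ) (x y : ℕ → ℤ) (h : CornerData μ m x y) :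
    qPow m x y 0 = 1 ∧ qPow m x y 1 = 0 ∧ qPow m x y 2 = 2 * (μ.card : ℤ) := by
  refine ⟨?_, ?_, ?_⟩
  · simp [h.qPow_eq, μ.card_innerContents]
  · simp [h.qPow_eq, μ.sum_innerContents_eq_sum_outerContents]
  · rw [h.qPow_eq, μ.sum_innerContents_sq_sub_sum_outerContents_sq]
end

section
/- Let λ be a partition with inner corner contents x_0,…,x_m and outer corner contents y_1,…,y_m, let k be a nonnegative integer, and let λ^{i+} = λ ∪ {□_i} be the partition obtained by adding a box at the inner corner of content x_i. Then q_k(λ^{i+}) − q_k(λ) = Σ_{1 ≤ j ≤ k/2} 2·C(k,2j)·x_i^{k−2j}, where q_k(ν) denotes Σ over inner corner contents of ν of the k-th power minus Σ over outer corner contents of ν of the k-th power. -/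
open Finset

open PaperDefs

/-! Read the boundary of a diagram as its 01-sequence `ZOne`. A box of content `t` is addable
exactly when `(z_{t-1}, z_t) = (0, 1)` and removable exactly when `(z_{t-1}, z_t) = (1, 0)`, so
`[t inner] - [t outer] = z_t - z_{t-1}` and `q_k = Σ_t (z_t - z_{t-1}) t^k`. Adding the box of
content `c` swaps `z_{c-1} = 0` and `z_c = 1`; this changes the weight by `+1` at `c ± 1` and by
`-2` at `c`, so `q_k` grows by `(c + 1)^k + (c - 1)^k - 2 c^k`, in which the binomial theorem
cancels the odd powers of `1`. -/

theorem sum_range_eq_sum_Icc_two_mul {M : Type*} [AddCommMonoid M] (n : ℕ) (g : ℕ → M)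
    (hg : ∀ m, Odd m → g m = 0) :
    ∑ m ∈ range (n + 1), g m = ∑ j ∈ Icc 0 (n / 2), g (2 * j) := by
  rw [← sum_image (g := (2 * ·)) fun a _ b _ hab => by simpa using hab]
  symm
  refine sum_subset (fun m => by simp only [mem_image, mem_Icc, mem_range]; omega) ?_
  intro m hm hmim
  refine hg m (Nat.not_even_iff_odd.mp fun ⟨j, hj⟩ => hmim ?_)
  simp only [mem_image, mem_Icc, mem_range] at hm ⊢
  exact ⟨j, by omega, by omega⟩

theorem add_one_pow_add_sub_one_pow {R : Type*} [CommRing R] (c : R) (k : ℕ) :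
    (c + 1) ^ k + (c - 1) ^ k
      = ∑ j ∈ Icc 0 (k / 2), 2 * (k.choose (2 * j) : R) * c ^ (k - 2 * j) := by
  have hbinom : (c + 1) ^ k + (c - 1) ^ k
      = ∑ m ∈ range (k + 1), (1 + (-1) ^ m) * c ^ (k - m) * (k.choose m : R) := by
    rw [add_comm c, sub_eq_neg_add, add_pow, add_pow, ← sum_add_distrib]
    refine sum_congr rfl fun m _ => ?_
    ring
  rw [hbinom, sum_range_eq_sum_Icc_two_mul]
  · refine sum_congr rfl fun j _ => ?_
    rw [pow_mul, neg_one_sq, one_pow]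
    ring
  · intro m hm
    rw [hm.neg_one_pow]
    ring

namespace YoungDiagram

variable {μ ν : YoungDiagram}

theorem rowLen_sub_lt_of_lt (μ : YoungDiagram) {r r' : ℕ} (h : r < r') :
    (μ.rowLen r' : ℤ) - r' < μ.rowLen r - r := by
  have := μ.rowLen_anti r r' h.le
  omega

theorem mem_of_cells_eq_insert {p : ℕ × ℕ} (hν : ν.cells = insert p μ.cells) (q : ℕ × ℕ) :
    q ∈ ν ↔ q = p ∨ q ∈ μ := by
  rw [← mem_cells, hν, Finset.mem_insert, mem_cells]

theorem rowLen_eq_of_cells_eq_insert {p : ℕ × ℕ} (hp : p ∉ μ)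
    (hν : ν.cells = insert p μ.cells) : μ.rowLen p.1 = p.2 := by
  obtain ⟨i, j⟩ := p
  show μ.rowLen i = j
  have hle : μ.rowLen i ≤ j := not_lt.mp (mt mem_iff_lt_rowLen.mpr hp)
  rcases j with _ | j
  · omega
  · have hleft : (i, j) ∈ ν :=
      ν.up_left_mem le_rfl j.le_succ ((mem_of_cells_eq_insert hν _).mpr (Or.inl rfl))
    rcases (mem_of_cells_eq_insert hν _).mp hleft with h | h
    · simp at h
    · have := mem_iff_lt_rowLen.mp h
      omega

theorem rowLen_of_cells_eq_insert {p : ℕ × ℕ} (hp : p ∉ μ)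
    (hν : ν.cells = insert p μ.cells) (r : ℕ) :
    ν.rowLen r = if r = p.1 then p.2 + 1 else μ.rowLen r := by
  have hp2 := rowLen_eq_of_cells_eq_insert hp hν
  refine eq_of_forall_lt_iff fun j => ?_
  rw [← mem_iff_lt_rowLen, mem_of_cells_eq_insert hν, mem_iff_lt_rowLen, Prod.ext_iff]
  split_ifs with hr
  · subst hr
    omega
  · simp [hr]

theorem isLowerSet_insert_rowLen {r : ℕ} (h : r = 0 ∨ μ.rowLen r < μ.rowLen (r - 1)) :
    IsLowerSet (insert (r, μ.rowLen r) (μ.cells : Set (ℕ × ℕ))) := by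
  rintro a ⟨i, j⟩ hle (rfl | ha)
  · obtain ⟨hi, hj⟩ := Prod.mk_le_mk.mp hle
    by_cases hb : (i, j) = (r, μ.rowLen r)
    · exact Or.inl hb
    · refine Or.inr (mem_iff_lt_rowLen.mpr ?_)
      simp only [Prod.ext_iff] at hb
      rcases hi.eq_or_lt with rfl | hi
      · omega
      · have := μ.rowLen_anti i (r - 1) (by omega)
        omega
  · exact Or.inr (μ.isLowerSet hle ha)

theorem isLowerSet_diff_rowLen {r : ℕ} (h : μ.rowLen (r + 1) < μ.rowLen r) :
    IsLowerSet ((μ.cells : Set (ℕ × ℕ)) \ {(r, μ.rowLen r - 1)}) := by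
  refine μ.isLowerSet.erase fun ⟨i, j⟩ hb hle => ?_
  obtain ⟨hi, hj⟩ := Prod.mk_le_mk.mp hle
  have hlt := mem_iff_lt_rowLen.mp hb
  have := μ.rowLen_anti r i hi
  have : i ≤ r := by
    by_contra! hri
    have := μ.rowLen_anti (r + 1) i hri
    omega
  exact Prod.ext (by omega) (by omega)

end YoungDiagram

namespace PaperDefs

open YoungDiagram

variable {μ ν : YoungDiagram}

theorem not_zOne_iff {i : ℤ} : ¬ ZOne μ i ↔ ∃ r : ℕ, i = μ.rowLen r - (r + 1) := by
  simp [ZOne]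

theorem zOne_rowLen_sub_iff (r : ℕ) :
    ZOne μ (μ.rowLen r - r) ↔ r = 0 ∨ μ.rowLen r < μ.rowLen (r - 1) := by
  constructor
  · intro h
    refine or_iff_not_imp_left.mpr fun hr => ?_
    have hne := h (r - 1)
    have := μ.rowLen_anti (r - 1) r (by omega)
    push_cast [Nat.one_le_iff_ne_zero.mpr hr] at hne
    omega
  · intro h r'
    rcases lt_or_ge r' r with hr' | hr'
    · have := μ.rowLen_anti r' (r - 1) (by omega)
      omega
    · have := μ.rowLen_anti r r' hr'
      omega

theorem zOne_rowLen_sub_sub_iff (r : ℕ) :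
    ZOne μ (μ.rowLen r - (r + 1) - 1) ↔ μ.rowLen (r + 1) < μ.rowLen r := by
  constructor
  · intro h
    have hne := h (r + 1)
    have := μ.rowLen_anti r (r + 1) (by omega)
    push_cast at hne
    omega
  · intro h r'
    rcases le_or_gt r' r with hr' | hr'
    · have := μ.rowLen_anti r' r hr'
      omega
    · have := μ.rowLen_anti (r + 1) r' hr'
      omega

theorem innerCorner_iff_zOne {t : ℤ} : InnerCorner μ t ↔ ¬ ZOne μ (t - 1) ∧ ZOne μ t := by
  constructor
  · rintro ⟨ν, p, hp, hν, rfl⟩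
    rw [mem_cells] at hp
    have hcontent : content p = μ.rowLen p.1 - p.1 := by
      rw [content, rowLen_eq_of_cells_eq_insert hp hν]
    refine ⟨not_zOne_iff.mpr ⟨p.1, by omega⟩, hcontent ▸ (zOne_rowLen_sub_iff p.1).mpr ?_⟩
    refine or_iff_not_imp_left.mpr fun h0 => ?_
    have := ν.rowLen_anti (p.1 - 1) p.1 (by omega)
    simp only [rowLen_of_cells_eq_insert hp hν, if_pos, show p.1 - 1 ≠ p.1 by omega,
      if_false] at this
    rw [rowLen_eq_of_cells_eq_insert hp hν]
    omega
  · rintro ⟨h1, h2⟩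
    obtain ⟨r, hr⟩ := not_zOne_iff.mp h1
    obtain rfl : t = μ.rowLen r - r := by omega
    refine ⟨⟨insert (r, μ.rowLen r) μ.cells, by
      rw [coe_insert]; exact isLowerSet_insert_rowLen ((zOne_rowLen_sub_iff r).mp h2)⟩,
      (r, μ.rowLen r), by simp [mem_iff_lt_rowLen], rfl, rfl⟩

theorem outerCorner_iff_zOne {t : ℤ} : OuterCorner μ t ↔ ZOne μ (t - 1) ∧ ¬ ZOne μ t := by
  constructor
  · rintro ⟨ρ, p, hp, hμ, rfl⟩
    rw [mem_cells] at hp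
    have hrow := rowLen_of_cells_eq_insert hp hμ
    have hp2 := rowLen_eq_of_cells_eq_insert hp hμ
    have hcontent : content p = μ.rowLen p.1 - (p.1 + 1) := by
      rw [content, hrow, if_pos rfl]
      push_cast
      ring
    refine ⟨hcontent ▸ (zOne_rowLen_sub_sub_iff p.1).mpr ?_, not_zOne_iff.mpr ⟨p.1, hcontent⟩⟩
    have := ρ.rowLen_anti p.1 (p.1 + 1) (by omega)
    simp only [hrow, if_pos, show p.1 + 1 ≠ p.1 by omega, if_false]
    omega
  · rintro ⟨h1, h2⟩
    obtain ⟨r, rfl⟩ := not_zOne_iff.mp h2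
    have hr := (zOne_rowLen_sub_sub_iff r).mp h1
    have hmem : (r, μ.rowLen r - 1) ∈ μ.cells := by
      rw [mem_cells, mem_iff_lt_rowLen]
      omega
    refine ⟨⟨μ.cells.erase (r, μ.rowLen r - 1), by
      rw [coe_erase]; exact isLowerSet_diff_rowLen hr⟩,
      (r, μ.rowLen r - 1), by simp, (insert_erase hmem).symm, ?_⟩
    simp only [content]
    omega

theorem zOne_of_addBoxAt {c : ℤ} (h : AddBoxAt μ ν c) (j : ℤ) :
    ZOne ν j ↔ j = c - 1 ∨ (j ≠ c ∧ ZOne μ j) := by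
  obtain ⟨p, hp, hν, rfl⟩ := h
  rw [mem_cells] at hp
  have hp2 := rowLen_eq_of_cells_eq_insert hp hν
  rw [← not_iff_not]
  simp only [not_zOne_iff, not_or, not_and, rowLen_of_cells_eq_insert hp hν, content]
  constructor
  · rintro ⟨r, rfl⟩
    split_ifs with hr
    · subst hr
      push_cast
      exact ⟨by omega, fun hne => (hne (by ring)).elim⟩
    · refine ⟨?_, fun _ => ⟨r, rfl⟩⟩
      rcases Nat.lt_or_gt_of_ne hr with hlt | hlt
      · have := μ.rowLen_sub_lt_of_lt hlt
        omega
      · have := μ.rowLen_sub_lt_of_lt hlt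
        omega
  · rintro ⟨hne, hr⟩
    by_cases hj : j = p.2 - p.1
    · exact ⟨p.1, by rw [if_pos rfl]; push_cast; omega⟩
    · obtain ⟨r, rfl⟩ := hr hj
      refine ⟨r, ?_⟩
      rw [if_neg]
      rintro rfl
      exact hne (by omega)

open Classical in
noncomputable def cornerWeight (μ : YoungDiagram) (t : ℤ) : ℤ :=
  (if InnerCorner μ t then 1 else 0) - if OuterCorner μ t then 1 else 0

open Classical in
theorem cornerWeight_eq (μ : YoungDiagram) (t : ℤ) :
    cornerWeight μ t = (if ZOne μ t then 1 else 0) - if ZOne μ (t - 1) then 1 else 0 := by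
  rw [cornerWeight, innerCorner_iff_zOne, outerCorner_iff_zOne]
  split_ifs <;> tauto

open Classical in
theorem cornerWeight_of_addBoxAt {c : ℤ} (h : AddBoxAt μ ν c) (t : ℤ) :
    cornerWeight ν t = cornerWeight μ t + (if t = c - 1 then 1 else 0)
      + (if t = c + 1 then 1 else 0) - 2 * if t = c then 1 else 0 := by
  obtain ⟨hc1, hc⟩ := innerCorner_iff_zOne.mp ⟨ν, h⟩
  rw [cornerWeight_eq, cornerWeight_eq, zOne_of_addBoxAt h, zOne_of_addBoxAt h]
  have hne : c ≠ c - 1 := by omega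
  by_cases h0 : t = c
  · simp [h0, hc, hc1, hne]
  by_cases hm : t = c - 1
  · simp [hm, hc1, show c - 1 - 1 ≠ c by omega, show c - 1 ≠ c + 1 by omega]
    ring
  by_cases hp : t = c + 1
  · simp [hp, hc, hne, show c + 1 ≠ c - 1 by omega]
  · simp [*, show t - 1 ≠ c - 1 by omega, show t - 1 ≠ c by omega]

open Classical in
theorem sum_cornerWeight_sub_of_addBoxAt {c : ℤ} (h : AddBoxAt μ ν c) (k : ℕ) {S : Finset ℤ}
    (hS : {c - 1, c, c + 1} ⊆ S) :
    ∑ t ∈ S, cornerWeight ν t * t ^ k - ∑ t ∈ S, cornerWeight μ t * t ^ k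
      = (c + 1) ^ k + (c - 1) ^ k - 2 * c ^ k := by
  simp only [insert_subset_iff, singleton_subset_iff] at hS
  simp only [cornerWeight_of_addBoxAt h, add_mul, sub_mul, mul_assoc,
    ite_mul, one_mul, zero_mul, sum_add_distrib, sum_sub_distrib,
    ← mul_sum, sum_ite_eq', hS, if_true]
  ring

section CornerData

variable {m : ℕ} {x y : ℕ → ℤ}

theorem CornerData.innerCorner_iff_mem (h : CornerData μ m x y) {t : ℤ} :
    InnerCorner μ t ↔ t ∈ (range (m + 1)).image x := by
  simp [h.1 t]

theorem CornerData.outerCorner_iff_mem (h : CornerData μ m x y) {t : ℤ} :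
    OuterCorner μ t ↔ t ∈ (range m).image (fun j => y (j + 1)) := by
  rw [h.2.1 t, mem_image]
  constructor
  · rintro ⟨j, hj1, hjm, rfl⟩
    exact ⟨j - 1, mem_range.mpr (by omega), by rw [Nat.sub_add_cancel hj1]⟩
  · rintro ⟨j, hj, rfl⟩
    exact ⟨j + 1, by omega, mem_range.mp hj, rfl⟩

theorem CornerData.injOn_inner (h : CornerData μ m x y) : Set.InjOn x (range (m + 1)) :=
  StrictMonoOn.injOn fun _ _ b hb hab => h.2.2.1 _ b hab (by simpa [Nat.lt_succ_iff] using hb)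

theorem CornerData.injOn_outer (h : CornerData μ m x y) :
    Set.InjOn (fun j => y (j + 1)) (range m) :=
  StrictMonoOn.injOn fun a _ b hb hab =>
    h.2.2.2 (a + 1) (b + 1) (by omega) (by omega) (by simpa using hb)

theorem CornerData.qPow_eq_sum_cornerWeight (h : CornerData μ m x y) (k : ℕ) {S : Finset ℤ}
    (hS : ∀ t, InnerCorner μ t ∨ OuterCorner μ t → t ∈ S) :
    qPow m x y k = ∑ t ∈ S, cornerWeight μ t * t ^ k := by
  classical
  have hinner : S.filter (InnerCorner μ) = (range (m + 1)).image x := by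
    ext t
    rw [mem_filter, ← h.innerCorner_iff_mem]
    exact ⟨And.right, fun ht => ⟨hS t (Or.inl ht), ht⟩⟩
  have houter : S.filter (OuterCorner μ) = (range m).image (fun j => y (j + 1)) := by
    ext t
    rw [mem_filter, ← h.outerCorner_iff_mem]
    exact ⟨And.right, fun ht => ⟨hS t (Or.inr ht), ht⟩⟩
  simp only [cornerWeight, sub_mul, ite_mul, one_mul, zero_mul, sum_sub_distrib, ← sum_filter,
    hinner, houter, sum_image h.injOn_inner, sum_image h.injOn_outer, qPow]

end CornerData

end PaperDefs

theorem stmt5_general (μ ν : YoungDiagram) (m m' : ℕ) (x y x' y' : ℕ → ℤ)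
    (h : CornerData μ m x y) (h' : CornerData ν m' x' y')
    (i0 : ℕ) (hadd : AddBoxAt μ ν (x i0)) (k : ℕ) :
    qPow m' x' y' k - qPow m x y k
      = ∑ j ∈ Finset.Icc 1 (k / 2), 2 * (k.choose (2 * j) : ℤ) * x i0 ^ (k - 2 * j) := by
  set c := x i0
  set S := (range (m + 1)).image x ∪ (range m).image (fun j => y (j + 1)) ∪
    (range (m' + 1)).image x' ∪ (range m').image (fun j => y' (j + 1)) ∪ {c - 1, c, c + 1}
  have hμS : ∀ t, InnerCorner μ t ∨ OuterCorner μ t → t ∈ S := by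
    intro t ht
    rw [h.innerCorner_iff_mem, h.outerCorner_iff_mem] at ht
    simp only [S, mem_union]
    tauto
  have hνS : ∀ t, InnerCorner ν t ∨ OuterCorner ν t → t ∈ S := by
    intro t ht
    rw [h'.innerCorner_iff_mem, h'.outerCorner_iff_mem] at ht
    simp only [S, mem_union]
    tauto
  rw [h'.qPow_eq_sum_cornerWeight k hνS, h.qPow_eq_sum_cornerWeight k hμS,
    sum_cornerWeight_sub_of_addBoxAt hadd k subset_union_right, add_one_pow_add_sub_one_pow,
    ← insert_Icc_add_one_left_eq_Icc (Nat.zero_le _), sum_insert (by simp)]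
  simp

theorem stmt5 (μ ν : YoungDiagram) (m m' : ℕ) (x y x' y' : ℕ → ℤ)
    (h : CornerData μ m x y) (h' : CornerData ν m' x' y')
    (i0 : ℕ) (hi0 : i0 ≤ m) (hadd : AddBoxAt μ ν (x i0)) (k : ℕ) :
    qPow m' x' y' k - qPow m x y k
      = ∑ j ∈ Finset.Icc 1 (k / 2), 2 * (k.choose (2 * j) : ℤ) * x i0 ^ (k - 2 * j) :=
  stmt5_general μ ν m m' x y x' y' h h' i0 hadd k
end

section
/- Define the difference operator D on functions g of partitions by Dg(λ) = Σ_{λ⁺ : |λ⁺/λ|=1} g(λ⁺) − g(λ), where the sum is over all partitions λ⁺ obtained from λ by adding one box. Then D(1/H_λ) = 0 for every partition λ; equivalently, 1/H_λ = Σ_{λ⁺ : |λ⁺/λ|=1} 1/H_{λ⁺}. -/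
/-!
Index a diagram `μ` with fewer than `N` rows by its β-numbers `βᵢ = μᵢ + N - 1 - i` (`i < N`);
they are distinct, `β_{N-1} = 0`, and adding a box in row `r` raises `β_r` by one. The
Frame–Robinson–Thrall formula `H_μ = ∏ βᵢ! / ∏_{i<j} (βᵢ - βⱼ)`, proved by peeling off the first
row, shows that this multiplies `1 / H_μ` by
`w_r = ∏_{j≠r} (β_r + 1 - β_j) / ((β_r + 1) ∏_{j≠r} (β_r - β_j))`, and `w_r = 0` when row `r`
cannot take a box. So the claim is `∑_r w_r = 1`: Lagrange interpolation of the monic polynomial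
`∏_j (X - β_j + 1)` at the nodes `β_0, …, β_{N-1}, -1` expresses its leading coefficient `1` as
this sum, the node `-1` contributing nothing because `β_{N-1} = 0`.
-/

open Finset

open PaperDefs

open scoped Nat

section BoxWeight

variable {ι K : Type*} [Field K]

def boxWeight [DecidableEq ι] (s : Finset ι) (b : ι → K) (r : ι) : K :=
  (∏ j ∈ s.erase r, (b r + 1 - b j)) / ((b r + 1) * ∏ j ∈ s.erase r, (b r - b j))

theorem boxWeight_eq_zero [DecidableEq ι] {s : Finset ι} {b : ι → K} {r j : ι} (hj : j ∈ s)
    (hjr : b j = b r + 1) : boxWeight s b r = 0 := by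
  have hne : j ≠ r := by rintro rfl; simp at hjr
  rw [boxWeight, prod_eq_zero (mem_erase.2 ⟨hne, hj⟩) (by rw [hjr, sub_self]), zero_div]

theorem sum_boxWeight_id_eq_one [DecidableEq K] {T : Finset K} (h0 : (0 : K) ∈ T)
    (h1 : (-1 : K) ∉ T) : ∑ t ∈ T, boxWeight T id t = 1 := by
  have hcard : #(insert (-1) T) = (Lagrange.nodal T (· - 1)).degree + 1 := by
    rw [Lagrange.degree_nodal, card_insert_of_notMem h1]; rfl
  have key := Lagrange.leadingCoeff_eq_sum (v := id) (Set.injOn_id _) hcard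
  rw [Lagrange.nodal_monic.leadingCoeff, sum_insert h1, Lagrange.eval_nodal,
    prod_eq_zero h0 (by simp), zero_div, zero_add] at key
  rw [key]
  refine sum_congr rfl fun t ht => ?_
  have htne : (-1 : K) ≠ t := by rintro rfl; exact h1 ht
  rw [Lagrange.eval_nodal, erase_insert_of_ne htne, prod_insert (fun h => h1 (mem_of_mem_erase h)),
    ← mul_prod_erase T _ ht, boxWeight]
  simp only [id, sub_sub_cancel, one_mul, sub_neg_eq_add]
  congr 1
  exact prod_congr rfl fun u _ => by ring

theorem sum_boxWeight_eq_one [DecidableEq ι] [DecidableEq K] {s : Finset ι} {b : ι → K}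
    (hb : Set.InjOn b s) (h0 : ∃ i ∈ s, b i = 0) (h1 : ∀ i ∈ s, b i ≠ -1) :
    ∑ r ∈ s, boxWeight s b r = 1 := by
  obtain ⟨k, hk, hk0⟩ := h0
  have herase : ∀ r ∈ s, (s.image b).erase (b r) = (s.erase r).image b := fun r hr => by
    rw [erase_eq, erase_eq, image_sdiff_of_injOn hb (singleton_subset_iff.2 hr), image_singleton]
  have hinj : ∀ r ∈ s, Set.InjOn b (s.erase r) := fun r _ => hb.mono (erase_subset r s)
  rw [← sum_boxWeight_id_eq_one (T := s.image b) (hk0 ▸ mem_image_of_mem b hk)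
    (by simpa using fun i hi => h1 i hi), sum_image hb]
  refine sum_congr rfl fun r hr => ?_
  simp only [boxWeight, id, herase r hr, prod_image (hinj r hr)]

end BoxWeight

section Vandermonde

variable {K : Type*} [CommRing K]

def vandermondeProd (N : ℕ) (w : ℕ → K) : K :=
  ∏ i ∈ range N, ∏ j ∈ range i, (w j - w i)

theorem vandermondeProd_succ (N : ℕ) (w : ℕ → K) :
    vandermondeProd (N + 1) w =
      (∏ i ∈ range N, (w 0 - w (i + 1))) * vandermondeProd N (fun i => w (i + 1)) := by
  simp only [vandermondeProd, prod_range_succ' _ N, prod_range_succ' (fun j => w j - w _),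
    range_zero, prod_empty, mul_one, prod_mul_distrib]
  ring

theorem vandermondeProd_eq_mul {N r : ℕ} (hr : r < N) (w : ℕ → K) :
    vandermondeProd N w = (∏ j ∈ range r, (w j - w r)) * (∏ i ∈ Ioo r N, (w r - w i)) *
      ∏ i ∈ (range N).erase r, ∏ j ∈ (range i).erase r, (w j - w i) := by
  have hsplit : ∀ i ∈ (range N).erase r, ∏ j ∈ range i, (w j - w i) =
      (if r < i then w r - w i else 1) * ∏ j ∈ (range i).erase r, (w j - w i) := by
    intro i _
    split_ifs with hri
    · exact (mul_prod_erase _ _ (mem_range.2 hri)).symm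
    · rw [one_mul, erase_eq_of_notMem (by simpa using hri)]
  have hfilter : ((range N).erase r).filter (r < ·) = Ioo r N := by
    ext i; simp only [mem_filter, mem_erase, mem_range, mem_Ioo]; omega
  rw [vandermondeProd, ← mul_prod_erase _ _ (mem_range.2 hr), prod_congr rfl hsplit,
    prod_mul_distrib, prod_ite, prod_const_one, mul_one, hfilter, mul_assoc]

theorem vandermondeProd_update_mul {N r : ℕ} (hr : r < N) (w : ℕ → K) (x : K) :
    vandermondeProd N (Function.update w r x) * ∏ j ∈ (range N).erase r, (w r - w j) =
      vandermondeProd N w * ∏ j ∈ (range N).erase r, (x - w j) := by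
  have hsplit : ∀ y : K, ∏ j ∈ (range N).erase r, (y - w j) =
      (∏ j ∈ range r, (y - w j)) * ∏ j ∈ Ioo r N, (y - w j) := fun y => by
    have hdisj : Disjoint (range r) (Ioo r N) :=
      disjoint_left.2 fun i hi hi' => by simp only [mem_range, mem_Ioo] at hi hi'; omega
    rw [← prod_union hdisj]
    congr 1
    ext i; simp only [mem_erase, mem_range, mem_union, mem_Ioo]; omega
  have hrest : ∏ i ∈ (range N).erase r, ∏ j ∈ (range i).erase r,
      (Function.update w r x j - Function.update w r x i) =
      ∏ i ∈ (range N).erase r, ∏ j ∈ (range i).erase r, (w j - w i) :=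
    prod_congr rfl fun i hi => prod_congr rfl fun j hj => by
      rw [Function.update_of_ne (ne_of_mem_erase hi), Function.update_of_ne (ne_of_mem_erase hj)]
  have hlow : ∀ y : K, ∏ j ∈ range r, (Function.update w r y j - y) = ∏ j ∈ range r, (w j - y) :=
    fun y => prod_congr rfl fun j hj => by rw [Function.update_of_ne (mem_range.1 hj).ne]
  have hhigh : ∀ y : K, ∏ i ∈ Ioo r N, (y - Function.update w r x i) = ∏ i ∈ Ioo r N, (y - w i) :=
    fun y => prod_congr rfl fun i hi => by rw [Function.update_of_ne (mem_Ioo.1 hi).1.ne']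
  rw [vandermondeProd_eq_mul hr, vandermondeProd_eq_mul hr, hrest, Function.update_self, hlow,
    hhigh, hsplit, hsplit]
  have hswap : (∏ j ∈ range r, (w j - x)) * ∏ j ∈ range r, (w r - w j) =
      (∏ j ∈ range r, (w j - w r)) * ∏ j ∈ range r, (x - w j) := by
    rw [← prod_mul_distrib, ← prod_mul_distrib]
    exact prod_congr rfl fun _ _ => by ring
  linear_combination (∏ i ∈ Ioo r N, (x - w i)) * (∏ i ∈ Ioo r N, (w r - w i)) *
    (∏ i ∈ (range N).erase r, ∏ j ∈ (range i).erase r, (w j - w i)) * hswap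

end Vandermonde

namespace YoungDiagram

variable {μ ν : YoungDiagram} {r : ℕ}

theorem rowLen_eq_of_forall_mem_iff {i L : ℕ} (h : ∀ j, (i, j) ∈ μ ↔ j < L) :
    μ.rowLen i = L :=
  eq_of_forall_lt_iff fun j => mem_iff_lt_rowLen.symm.trans (h j)

theorem colLen_eq_of_forall_mem_iff {j L : ℕ} (h : ∀ i, (i, j) ∈ μ ↔ i < L) :
    μ.colLen j = L :=
  eq_of_forall_lt_iff fun i => mem_iff_lt_colLen.symm.trans (h i)

def Addable (μ : YoungDiagram) (r : ℕ) : Prop :=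
  r = 0 ∨ μ.rowLen r < μ.rowLen (r - 1)

instance (μ : YoungDiagram) : DecidablePred μ.Addable := fun _ => instDecidableOr

theorem Addable.isLowerSet_insert (h : μ.Addable r) :
    IsLowerSet (insert (r, μ.rowLen r) (μ.cells : Set (ℕ × ℕ))) := by
  rintro x ⟨i, j⟩ hyx (rfl | hx)
  · obtain ⟨hi, hj⟩ : i ≤ r ∧ j ≤ μ.rowLen r := hyx
    by_cases hmem : (i, j) ∈ μ
    · exact Or.inr hmem
    have hrow : μ.rowLen i ≤ j := not_lt.1 (mt mem_iff_lt_rowLen.2 hmem)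
    have hir : i = r := by
      by_contra hir
      have hanti : μ.rowLen (r - 1) ≤ μ.rowLen i := μ.rowLen_anti _ _ (by omega)
      rcases h with h | h <;> omega
    subst hir
    exact Or.inl (Prod.ext rfl (le_antisymm hj hrow))
  · exact Or.inr (μ.isLowerSet hyx hx)

/-- Outside addable rows the diagram is returned unchanged. -/
def addCell (μ : YoungDiagram) (r : ℕ) : YoungDiagram :=
  if h : μ.Addable r then
    ⟨insert (r, μ.rowLen r) μ.cells, by simpa only [coe_insert] using h.isLowerSet_insert⟩
  else μ

theorem Addable.cells_addCell (h : μ.Addable r) :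
    (μ.addCell r).cells = insert (r, μ.rowLen r) μ.cells := by
  simp only [addCell, dif_pos h]

theorem Addable.mem_addCell (h : μ.Addable r) {c : ℕ × ℕ} :
    c ∈ μ.addCell r ↔ c = (r, μ.rowLen r) ∨ c ∈ μ := by
  rw [← mem_cells, h.cells_addCell, mem_insert, mem_cells]

theorem Addable.rowLen_addCell (h : μ.Addable r) (i : ℕ) :
    (μ.addCell r).rowLen i = μ.rowLen i + if i = r then 1 else 0 :=
  rowLen_eq_of_forall_mem_iff fun j => by
    rw [h.mem_addCell, mem_iff_lt_rowLen, Prod.mk.injEq]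
    split_ifs with hi
    · subst hi; omega
    · omega

theorem Addable.le_colLen_zero (h : μ.Addable r) : r ≤ μ.colLen 0 := by
  rcases h with rfl | h
  · exact Nat.zero_le _
  · have : r - 1 < μ.colLen 0 :=
      mem_iff_lt_colLen.1 ((mem_iff_lt_rowLen (i := r - 1) (j := 0)).2 (by omega))
    omega

theorem Addable.eq_of_addCell_eq {r' : ℕ} (h : μ.Addable r) (h' : μ.Addable r')
    (he : μ.addCell r = μ.addCell r') : r = r' := by
  have hmem : (r, μ.rowLen r) ∈ μ.addCell r' := he ▸ h.mem_addCell.2 (Or.inl rfl)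
  rcases h'.mem_addCell.1 hmem with hc | hc
  · exact congrArg Prod.fst hc
  · exact absurd (mem_iff_lt_rowLen.1 hc) (lt_irrefl _)

theorem addBox_iff : AddBox μ ν ↔ ∃ r, μ.Addable r ∧ μ.addCell r = ν := by
  constructor
  · rintro ⟨⟨i, j⟩, hnew, hcells⟩
    have hν : ∀ {c}, c ∈ ν ↔ c = (i, j) ∨ c ∈ μ := by
      intro c; rw [← mem_cells, hcells, mem_insert, mem_cells]
    have hij : (i, j) ∈ ν := hν.2 (Or.inl rfl)
    have hrow : μ.rowLen i ≤ j := not_lt.1 (mt mem_iff_lt_rowLen.2 (by simpa using hnew))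
    have hj : j = μ.rowLen i := by
      rcases hν.1 (ν.up_left_mem le_rfl hrow hij) with hc | hc
      · exact ((Prod.mk.inj hc).2).symm
      · exact absurd (mem_iff_lt_rowLen.1 hc) (lt_irrefl _)
    subst hj
    have hadd : μ.Addable i := by
      rcases Nat.eq_zero_or_pos i with hi | hi
      · exact Or.inl hi
      rcases hν.1 (ν.up_left_mem (Nat.sub_le i 1) le_rfl hij) with hc | hc
      · exact absurd (Prod.mk.inj hc).1 (by omega)
      · exact Or.inr (mem_iff_lt_rowLen.1 hc)
    exact ⟨i, hadd, YoungDiagram.ext (hadd.cells_addCell.trans hcells.symm)⟩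
  · rintro ⟨r, h, rfl⟩
    exact ⟨(r, μ.rowLen r), fun hc => lt_irrefl _ (mem_iff_lt_rowLen.1 ((mem_cells _).1 hc)),
      h.cells_addCell⟩

theorem setOf_addBox_eq {N : ℕ} (hN : μ.colLen 0 < N) :
    {ν | AddBox μ ν} = μ.addCell '' ((range N).filter μ.Addable : Set ℕ) := by
  ext ν
  simp only [Set.mem_ofPred_eq, addBox_iff, coe_filter, mem_range, Set.mem_image]
  exact exists_congr fun r =>
    ⟨fun ⟨h, he⟩ => ⟨⟨h.le_colLen_zero.trans_lt hN, h⟩, he⟩, fun ⟨⟨_, h⟩, he⟩ => ⟨h, he⟩⟩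

noncomputable def dropFirstRow (μ : YoungDiagram) : YoungDiagram where
  cells := μ.cells.preimage (fun c : ℕ × ℕ => (c.1 + 1, c.2)) <|
    Function.Injective.injOn fun a b h => by
      simp only [Prod.mk.injEq, add_left_inj] at h
      exact Prod.ext h.1 h.2
  isLowerSet _ _ hyx hx := by
    simp only [mem_coe, mem_preimage] at hx ⊢
    exact μ.isLowerSet (Prod.mk_le_mk.2 ⟨Nat.succ_le_succ hyx.1, hyx.2⟩) hx

theorem mem_dropFirstRow {c : ℕ × ℕ} : c ∈ μ.dropFirstRow ↔ (c.1 + 1, c.2) ∈ μ := by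
  simp only [← mem_cells, dropFirstRow, mem_preimage]

theorem rowLen_dropFirstRow (i : ℕ) : μ.dropFirstRow.rowLen i = μ.rowLen (i + 1) :=
  rowLen_eq_of_forall_mem_iff fun _ => mem_dropFirstRow.trans mem_iff_lt_rowLen

theorem colLen_dropFirstRow (j : ℕ) : μ.dropFirstRow.colLen j = μ.colLen j - 1 :=
  colLen_eq_of_forall_mem_iff fun i => by
    rw [mem_dropFirstRow, mem_iff_lt_colLen]
    dsimp only
    omega

theorem hookLen_dropFirstRow (i j : ℕ) : hookLen μ.dropFirstRow i j = hookLen μ (i + 1) j := by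
  simp only [hookLen, rowLen_dropFirstRow, colLen_dropFirstRow, Nat.sub_sub, Nat.add_comm 1 i]

theorem hprod_eq_mul_hprod_dropFirstRow (μ : YoungDiagram) :
    Hprod μ = (∏ j ∈ range (μ.rowLen 0), (hookLen μ 0 j : ℚ)) * Hprod μ.dropFirstRow := by
  have hrow : μ.cells.filter (fun c => c.1 = 0) = {0} ×ˢ range (μ.rowLen 0) := row_eq_prod
  have hrest : μ.cells.filter (fun c => c.1 ≠ 0) =
      μ.dropFirstRow.cells.map ⟨fun c => (c.1 + 1, c.2), fun a b h => by
        simp only [Prod.mk.injEq, add_left_inj] at h; exact Prod.ext h.1 h.2⟩ := by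
    ext ⟨i, j⟩
    simp only [mem_filter, mem_cells, mem_map]
    constructor
    · rintro ⟨hij, hi⟩
      exact ⟨(i - 1, j), mem_dropFirstRow.2 (by rwa [Nat.sub_add_cancel (by omega)]),
        Prod.ext (Nat.sub_add_cancel (by omega)) rfl⟩
    · rintro ⟨⟨k, l⟩, hkl, hkij⟩
      obtain ⟨rfl, rfl⟩ := Prod.mk.inj hkij
      exact ⟨mem_dropFirstRow.1 hkl, by omega⟩
  rw [Hprod, ← prod_filter_mul_prod_filter_not μ.cells (fun c => c.1 = 0), hrow, hrest,
    prod_product, prod_singleton, prod_map, Hprod]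
  simp only [hookLen_dropFirstRow]
  rfl

def betaNum (μ : YoungDiagram) (N i : ℕ) : ℕ :=
  μ.rowLen i + (N - 1 - i)

theorem betaNum_lt_betaNum {N i j : ℕ} (hij : i < j) (hj : j < N) :
    μ.betaNum N j < μ.betaNum N i := by
  have := μ.rowLen_anti i j hij.le
  unfold betaNum
  omega

theorem betaNum_succ_succ (N i : ℕ) :
    μ.betaNum (N + 1) (i + 1) = μ.dropFirstRow.betaNum N i := by
  simp only [betaNum, rowLen_dropFirstRow]
  omega

theorem injOn_betaNum (N : ℕ) : Set.InjOn (fun i => (μ.betaNum N i : ℚ)) (range N) := by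
  intro i hi j hj hij
  by_contra hne
  rcases Ne.lt_or_gt hne with h | h
  · exact (betaNum_lt_betaNum h (mem_range.1 hj)).ne' (Nat.cast_injective hij)
  · exact (betaNum_lt_betaNum h (mem_range.1 hi)).ne (Nat.cast_injective hij)

theorem Addable.betaNum_addCell (h : μ.Addable r) (N i : ℕ) :
    (μ.addCell r).betaNum N i = μ.betaNum N i + if i = r then 1 else 0 := by
  simp only [betaNum, h.rowLen_addCell]
  omega

theorem hookLen_zero_lt_hookLen_zero {j j' : ℕ} (hjj' : j < j') (hj' : j' < μ.rowLen 0) :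
    hookLen μ 0 j' < hookLen μ 0 j := by
  have := μ.colLen_anti j j' hjj'.le
  have : 0 < μ.colLen j' := mem_iff_lt_colLen.1 (mem_iff_lt_rowLen.2 hj')
  unfold hookLen
  omega

theorem hookLen_zero_ne_betaNum_sub {N i j : ℕ} (hi : i < N) (hj : j < μ.rowLen 0) :
    hookLen μ 0 j ≠ μ.betaNum (N + 1) 0 - μ.betaNum (N + 1) (i + 1) := by
  have hrow := μ.rowLen_anti 0 (i + 1) (Nat.zero_le _)
  have hcol : 0 < μ.colLen j := mem_iff_lt_colLen.1 (mem_iff_lt_rowLen.2 hj)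
  unfold hookLen betaNum
  by_cases hic : i + 1 < μ.colLen j
  · have : j < μ.rowLen (i + 1) := mem_iff_lt_rowLen.1 (mem_iff_lt_colLen.2 hic)
    omega
  · have : μ.rowLen (i + 1) ≤ j := not_lt.1 fun h =>
      hic (mem_iff_lt_colLen.1 (mem_iff_lt_rowLen.2 h))
    omega

/-- The hook lengths of the first row, together with the differences `β₀ - βᵢ` for `0 < i`,
are exactly `1, …, β₀`. -/
theorem prod_hookLen_zero_mul_prod_betaNum_sub {N : ℕ} (hμ : μ.rowLen (N + 1) = 0) :
    (∏ j ∈ range (μ.rowLen 0), (hookLen μ 0 j : ℚ)) *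
      ∏ i ∈ range N, ((μ.betaNum (N + 1) 0 : ℚ) - μ.betaNum (N + 1) (i + 1)) =
    (μ.betaNum (N + 1) 0)! := by
  set β := μ.betaNum (N + 1)
  set S₁ := (range (μ.rowLen 0)).image (hookLen μ 0)
  set S₂ := (range N).image fun i => β 0 - β (i + 1)
  have hβ : ∀ i < N, β (i + 1) < β 0 := fun i hi => betaNum_lt_betaNum i.succ_pos (by omega)
  have hinj₁ : Set.InjOn (hookLen μ 0) (range (μ.rowLen 0)) :=
    StrictAntiOn.injOn fun _ _ _ hj' h => hookLen_zero_lt_hookLen_zero h (mem_range.1 hj')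
  have hinj₂ : Set.InjOn (fun i => β 0 - β (i + 1)) (range N) := by
    refine StrictMonoOn.injOn fun i hi i' hi' h => ?_
    have : β (i' + 1) < β (i + 1) :=
      betaNum_lt_betaNum (Nat.succ_lt_succ h) (Nat.succ_lt_succ (mem_range.1 hi'))
    have := hβ i' (mem_range.1 hi')
    omega
  have hdisj : Disjoint S₁ S₂ := by
    simp only [S₁, S₂, disjoint_left, mem_image, mem_range, not_exists, not_and]
    rintro _ ⟨j, hj, rfl⟩ i hi
    exact (hookLen_zero_ne_betaNum_sub hi hj).symm
  have hsub : S₁ ∪ S₂ ⊆ Ico 1 (β 0 + 1) := by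
    simp only [S₁, S₂, union_subset_iff, image_subset_iff, mem_range, mem_Ico]
    refine ⟨fun j hj => ?_, fun i hi => by have := hβ i hi; omega⟩
    have hcol : 0 < μ.colLen j := mem_iff_lt_colLen.1 (mem_iff_lt_rowLen.2 hj)
    have hcol' : μ.colLen j ≤ N + 1 :=
      not_lt.1 fun h => by simpa [hμ] using mem_iff_lt_rowLen.1 (mem_iff_lt_colLen.2 h)
    simp only [hookLen, β, betaNum]
    omega
  have hunion : S₁ ∪ S₂ = Ico 1 (β 0 + 1) := by
    refine eq_of_subset_of_card_le hsub ?_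
    rw [card_union_of_disjoint hdisj, card_image_of_injOn hinj₁, card_image_of_injOn hinj₂,
      card_range, Nat.card_Ico, card_range]
    simp only [β, betaNum]
    omega
  have hfact : ∏ x ∈ S₁ ∪ S₂, (x : ℚ) = (β 0)! := by
    rw [hunion, ← Nat.cast_prod, prod_Ico_id_eq_factorial]
  rw [prod_union hdisj, prod_image hinj₁, prod_image hinj₂] at hfact
  rw [← hfact]
  congr 1
  exact prod_congr rfl fun i hi => (Nat.cast_sub (hβ i (mem_range.1 hi)).le).symm

theorem cells_eq_empty_of_rowLen_zero (hμ : μ.rowLen 0 = 0) : μ.cells = ∅ :=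
  eq_empty_of_forall_notMem fun c hc => by
    have := mem_iff_lt_rowLen.1 (μ.up_left_mem (Nat.zero_le c.1) le_rfl ((mem_cells c).1 hc))
    omega

theorem hprod_mul_vandermondeProd_betaNum {N : ℕ} (hμ : μ.rowLen N = 0) :
    Hprod μ * vandermondeProd N (fun i => (μ.betaNum N i : ℚ)) =
      ∏ i ∈ range N, ((μ.betaNum N i)! : ℚ) := by
  induction N generalizing μ with
  | zero => simp [Hprod, vandermondeProd, cells_eq_empty_of_rowLen_zero hμ]
  | succ N ih =>
    have hdrop : μ.dropFirstRow.rowLen N = 0 := by rw [rowLen_dropFirstRow, hμ]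
    calc Hprod μ * vandermondeProd (N + 1) (fun i => (μ.betaNum (N + 1) i : ℚ))
        = ((∏ j ∈ range (μ.rowLen 0), (hookLen μ 0 j : ℚ)) *
            ∏ i ∈ range N, ((μ.betaNum (N + 1) 0 : ℚ) - μ.betaNum (N + 1) (i + 1))) *
          (Hprod μ.dropFirstRow *
            vandermondeProd N (fun i => (μ.dropFirstRow.betaNum N i : ℚ))) := by
          rw [vandermondeProd_succ, hprod_eq_mul_hprod_dropFirstRow]
          simp only [betaNum_succ_succ]
          ring
      _ = ∏ i ∈ range (N + 1), ((μ.betaNum (N + 1) i)! : ℚ) := by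
          rw [prod_hookLen_zero_mul_prod_betaNum_sub hμ, ih hdrop, prod_range_succ']
          simp only [betaNum_succ_succ]
          ring

theorem hprod_pos (μ : YoungDiagram) : 0 < Hprod μ :=
  prod_pos fun c hc => by
    have h₁ := mem_iff_lt_rowLen.1 ((mem_cells c).1 hc)
    have h₂ := mem_iff_lt_colLen.1 ((mem_cells c).1 hc)
    unfold hookLen
    exact_mod_cast (by omega : 0 < μ.rowLen c.1 - c.2 + (μ.colLen c.2 - c.1) - 1)

theorem rowLen_eq_zero {i : ℕ} (hi : μ.colLen 0 ≤ i) : μ.rowLen i = 0 :=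
  Nat.eq_zero_of_not_pos fun h => (mem_iff_lt_colLen.1 (mem_iff_lt_rowLen.2 h)).not_ge hi

theorem Addable.prod_factorial_betaNum_addCell {N : ℕ} (h : μ.Addable r) (hr : r < N) :
    ∏ i ∈ range N, (((μ.addCell r).betaNum N i)! : ℚ) =
      (μ.betaNum N r + 1) * ∏ i ∈ range N, ((μ.betaNum N i)! : ℚ) := by
  rw [← mul_prod_erase _ _ (mem_range.2 hr), ← mul_prod_erase _ _ (mem_range.2 hr),
    h.betaNum_addCell, if_pos rfl, Nat.factorial_succ,
    prod_congr rfl fun i hi => by rw [h.betaNum_addCell, if_neg (ne_of_mem_erase hi), add_zero]]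
  push_cast
  ring

theorem Addable.one_div_hprod_addCell {N : ℕ} (h : μ.Addable r) (hr : r < N)
    (hμ : μ.rowLen N = 0) :
    1 / Hprod (μ.addCell r) =
      1 / Hprod μ * boxWeight (range N) (fun i => (μ.betaNum N i : ℚ)) r := by
  set b : ℕ → ℚ := fun i => μ.betaNum N i
  set P := ∏ j ∈ (range N).erase r, (b r - b j)
  set Q := ∏ j ∈ (range N).erase r, (b r + 1 - b j)
  have hb : (fun i => ((μ.addCell r).betaNum N i : ℚ)) = Function.update b r (b r + 1) := by
    ext i
    rcases eq_or_ne i r with rfl | hi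
    · simp [b, h.betaNum_addCell]
    · simp [b, h.betaNum_addCell, hi]
  have hμ' : (μ.addCell r).rowLen N = 0 := by rw [h.rowLen_addCell, hμ, if_neg hr.ne']
  have hF := hprod_mul_vandermondeProd_betaNum hμ
  have hF' := hprod_mul_vandermondeProd_betaNum hμ'
  rw [h.prod_factorial_betaNum_addCell hr, hb] at hF'
  have hE := vandermondeProd_update_mul hr b (b r + 1)
  have hV : vandermondeProd N b ≠ 0 :=
    right_ne_zero_of_mul (hF ▸ prod_ne_zero_iff.2 fun i _ => by positivity)
  have hP : P ≠ 0 := prod_ne_zero_iff.2 fun j hj => sub_ne_zero.2 fun hbj =>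
    ne_of_mem_erase hj (injOn_betaNum N (mem_of_mem_erase hj) (mem_range.2 hr) hbj.symm)
  have key : Hprod (μ.addCell r) * Q = (b r + 1) * P * Hprod μ := by
    refine mul_right_cancel₀ hV ?_
    linear_combination (-Hprod (μ.addCell r)) * hE + P * hF' - (b r + 1) * P * hF
  rw [boxWeight, one_div_mul_eq_div, div_div, div_eq_div_iff (hprod_pos _).ne'
    (mul_ne_zero (mul_ne_zero (by positivity) hP) (hprod_pos μ).ne')]
  linear_combination -key

theorem boxWeight_betaNum_eq_zero {N : ℕ} (h : ¬ μ.Addable r) (hr : r < N) :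
    boxWeight (range N) (fun i => (μ.betaNum N i : ℚ)) r = 0 := by
  obtain ⟨hr0, hlen⟩ := not_or.1 h
  have := μ.rowLen_anti (r - 1) r (Nat.sub_le r 1)
  refine boxWeight_eq_zero (j := r - 1) (mem_range.2 (by omega)) ?_
  norm_cast
  simp only [betaNum]
  omega

theorem sum_boxWeight_betaNum {N : ℕ} (hN : μ.colLen 0 < N) :
    ∑ r ∈ range N, boxWeight (range N) (fun i => (μ.betaNum N i : ℚ)) r = 1 := by
  refine sum_boxWeight_eq_one (injOn_betaNum N) ⟨N - 1, mem_range.2 (by omega), ?_⟩ fun i _ => ?_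
  · simp [betaNum, rowLen_eq_zero (show μ.colLen 0 ≤ N - 1 by omega)]
  · have : (0 : ℚ) ≤ μ.betaNum N i := Nat.cast_nonneg _
    linarith

end YoungDiagram

open YoungDiagram

theorem stmt7 (μ : YoungDiagram) :
    1 / Hprod μ = ∑ᶠ ν ∈ {ν : YoungDiagram | AddBox μ ν}, 1 / Hprod ν := by
  set N := μ.colLen 0 + 1
  have hN : μ.colLen 0 < N := Nat.lt_succ_self _
  have hinj : Set.InjOn μ.addCell ((range N).filter μ.Addable : Set ℕ) := fun r hr r' hr' he =>
    (mem_filter.1 hr).2.eq_of_addCell_eq (mem_filter.1 hr').2 he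
  rw [setOf_addBox_eq hN, finsum_mem_image hinj, finsum_mem_coe_finset, sum_filter]
  calc 1 / Hprod μ
      = 1 / Hprod μ * ∑ r ∈ range N, boxWeight (range N) (fun i => (μ.betaNum N i : ℚ)) r := by
        rw [sum_boxWeight_betaNum hN, mul_one]
    _ = _ := by
        rw [mul_sum]
        refine sum_congr rfl fun r hr => ?_
        split_ifs with h
        · exact (h.one_div_hprod_addCell (mem_range.1 hr) (rowLen_eq_zero hN.le)).symm
        · rw [boxWeight_betaNum_eq_zero h (mem_range.1 hr), mul_zero]
end

section
/- Let t be a positive integer, μ a t-core partition with parameters d_0,…,d_{t−1} (where b_i = t·d_i + i is the least index ≡ i mod t with z_{μ,b_i} = 1), and 1 ≤ k ≤ t−1. Let B_k be the multiset {(i,i+k) : 0 ≤ i ≤ t−1−k} ∪ {(i,i+t−k) : 0 ≤ i ≤ k−1}. Then the number of boxes of μ with hook length ≡ k (mod t) plus the number with hook length ≡ t−k (mod t) equals Σ_{(i,j)∈B_k} C(d_i − d_j, 2), where C(m,2) = m(m−1)/2 for any integer m (so C(m,2) = C(1−m,2) for m ≤ 0). -/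
open Finset

open PaperDefs

/-!
Read the rim of `μ` as its 01-sequence: the `j`-th one sits at `j - colLen j`, the zero of row `r`
at `rowLen r - (r + 1)`, and the box `(r, j)` corresponds to the inversion formed by this one and
this zero, its hook length being their distance. In a `t`-core every one is followed by a one `t`
steps later (else there is a hook of length `t`), so the ones on the runner `{x ≡ i mod t}` are
exactly the positions `≥ t dᵢ + i`. An inversion of distance `≡ r` starting on runner `i` ends on
runner `(i + r) % t`, so these are counted by a triangular number `C(g + 1, 2)`, where `g` is the
difference of the two `d`'s (minus one if the runner index wraps around). Pairing the runners `i`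
and `i + k` for the residues `k` and `t - k`, the two triangular numbers add up to `C(m, 2)` with
`m = dᵢ - d_{i+k}`.
-/

theorem mul_add_ediv_eq_and_emod_eq {t i : ℕ} (a : ℤ) (hi : i < t) :
    (t * a + i) / t = a ∧ (t * a + i) % t = i :=
  (Int.ediv_emod_unique (by omega)).mpr ⟨by ring, by omega, by omega⟩

theorem exists_lt_eq_mul_ediv_add (x : ℤ) {t : ℕ} (ht : 0 < t) :
    ∃ i < t, x = t * (x / t) + i := by
  have := Int.mul_ediv_add_emod x t
  have := Int.emod_nonneg x (by omega : (t : ℤ) ≠ 0)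
  have := Int.emod_lt_of_pos x (by omega : (0 : ℤ) < t)
  exact ⟨(x % t).toNat, by omega, by omega⟩

def triangle (n : ℕ) : Finset (ℕ × ℕ) :=
  (range n ×ˢ range n).filter fun p => p.1 + p.2 < n

@[simp]
theorem mem_triangle {n : ℕ} {p : ℕ × ℕ} : p ∈ triangle n ↔ p.1 + p.2 < n := by
  simp only [triangle, mem_filter, mem_product, mem_range]
  omega

theorem card_triangle (n : ℕ) : (triangle n).card = (n + 1).choose 2 := by
  have hfiber : ∀ s ∈ range n, ((triangle n).filter fun p => p.1 + p.2 = s).card = s + 1 := by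
    intro s hs
    rw [← Nat.card_antidiagonal s]
    congr 1
    ext ⟨a, b⟩
    simp only [mem_range] at hs
    simp only [mem_filter, mem_triangle, HasAntidiagonal.mem_antidiagonal]
    omega
  rw [card_eq_sum_card_fiberwise (f := fun p => p.1 + p.2) (s := triangle n) (t := range n)
      fun p hp => mem_range.mpr (mem_filter.mp hp).2,
    sum_congr rfl hfiber, ← add_zero (∑ s ∈ range n, (s + 1)), ← sum_range_succ' (fun s => s) n,
    sum_range_id, Nat.choose_two_right, Nat.add_sub_cancel, Nat.mul_comm]

theorem two_mul_choose_two_succ (n : ℕ) : 2 * ((n + 1).choose 2 : ℤ) = (n + 1) * n := by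
  induction n with
  | zero => simp
  | succ n ih =>
    rw [Nat.choose_succ_succ', Nat.choose_one_right]
    push_cast at ih ⊢
    linarith

theorem choose_two_toNat_neg_add (m : ℤ) :
    (((-m).toNat + 1).choose 2 : ℤ) + ((m - 1).toNat + 1).choose 2 = m * (m - 1) / 2 := by
  refine (Int.ediv_eq_of_eq_mul_right two_ne_zero ?_).symm
  rcases le_or_gt m 0 with hm | hm
  · obtain ⟨n, rfl⟩ : ∃ n : ℕ, m = -n := ⟨(-m).toNat, by omega⟩
    rw [neg_neg, Int.toNat_natCast, show (-(n : ℤ) - 1).toNat = 0 by omega, mul_add,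
      two_mul_choose_two_succ n]
    norm_num
    ring
  · obtain ⟨n, rfl⟩ : ∃ n : ℕ, m = n + 1 := ⟨(m - 1).toNat, by omega⟩
    rw [show (-((n : ℤ) + 1)).toNat = 0 by omega, add_sub_cancel_right, Int.toNat_natCast, mul_add,
      two_mul_choose_two_succ n]
    norm_num

/-- If the ones on runner `i` are the positions `t a + i` with `a ≥ d i`, this is how far the
zeros on runner `(i + r) % t` reach beyond the first one on runner `i`, in steps of `t`. -/
def runnerGap (d : ℕ → ℤ) (t r i : ℕ) : ℤ :=
  d ((i + r) % t) - d i - ((i + r) / t : ℕ)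

section Abacus

variable {Z : ℤ → Prop} {t r : ℕ} {d : ℕ → ℤ}

theorem sum_range_runnerGap {M : Type*} [AddCommMonoid M] (f : ℤ → M) (hrt : r ≤ t) :
    ∑ i ∈ range t, f (runnerGap d t r i) =
      ∑ i ∈ range (t - r), f (d (i + r) - d i) + ∑ i ∈ range r, f (d i - d (t - r + i) - 1) := by
  conv_lhs => rw [← Nat.sub_add_cancel hrt, sum_range_add]
  congr 1 <;> refine sum_congr rfl fun i hi => ?_ <;> rw [mem_range] at hi <;> unfold runnerGap
  · rw [Nat.mod_eq_of_lt (by omega), Nat.div_eq_of_lt (by omega)]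
    simp
  · rw [Nat.sub_add_cancel hrt, show t - r + i + r = i + 1 * t by omega,
      Nat.add_mul_mod_self_right, Nat.add_mul_div_right _ _ (by omega),
      Nat.mod_eq_of_lt (by omega), Nat.div_eq_of_lt (by omega)]
    simp

theorem not_mul_add_add_mul_add_iff (hz : ∀ i < t, ∀ a : ℤ, Z (t * a + i) ↔ d i ≤ a)
    {i : ℕ} (hi : i < t) (a m : ℤ) :
    ¬ Z (t * a + i + (t * m + r)) ↔ a + m - d i < runnerGap d t r i := by
  have hdm : ((t * ((i + r) / t) + (i + r) % t : ℕ) : ℤ) = i + r := by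
    exact_mod_cast Nat.div_add_mod (i + r) t
  rw [Nat.cast_add, Nat.cast_mul] at hdm
  rw [show t * a + i + (t * m + r) = t * (a + m + ((i + r) / t : ℕ)) + ((i + r) % t : ℕ) by
      linear_combination -hdm, hz _ (Nat.mod_lt _ (by omega)), runnerGap]
  omega

/-- The inversion whose one is the `u`-th one on runner `i` and whose zero lies `t m + r`
further on. -/
def runnerInversion (t r : ℕ) (d : ℕ → ℤ) (q : Σ _ : ℕ, ℕ × ℕ) : ℤ × ℤ :=
  (t * (d q.1 + q.2.1) + q.1, t * (d q.1 + q.2.1) + q.1 + (t * q.2.2 + r))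

theorem injOn_runnerInversion (s : ℕ → Finset (ℕ × ℕ)) :
    Set.InjOn (runnerInversion t r d) ↑((range t).sigma s) := by
  rintro ⟨i, u, m⟩ hq ⟨i', u', m'⟩ hq' h
  simp only [coe_sigma, Set.mem_sigma_iff, coe_range, Set.mem_Iio] at hq hq'
  simp only [runnerInversion, Prod.mk.injEq] at h
  obtain ⟨hdiv, hmod⟩ := mul_add_ediv_eq_and_emod_eq (d i + u) hq.1
  rw [h.1, (mul_add_ediv_eq_and_emod_eq (d i' + u') hq'.1).1] at hdiv
  rw [h.1, (mul_add_ediv_eq_and_emod_eq (d i' + u') hq'.1).2] at hmod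
  obtain rfl : i' = i := by exact_mod_cast hmod
  have hm : (t : ℤ) * m = t * m' := by linarith [h.2, h.1]
  obtain rfl : m = m' := by exact_mod_cast mul_left_cancel₀ (by omega : (t : ℤ) ≠ 0) hm
  obtain rfl : u = u' := by omega
  rfl

theorem image_runnerInversion (hz : ∀ i < t, ∀ a : ℤ, Z (t * a + i) ↔ d i ≤ a) (hr0 : 0 < r)
    (hrt : r < t) :
    runnerInversion t r d '' ↑((range t).sigma fun i => triangle (runnerGap d t r i).toNat) =
      {p : ℤ × ℤ | Z p.1 ∧ ¬ Z p.2 ∧ p.1 < p.2 ∧ (p.2 - p.1) % t = r} := by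
  ext ⟨x, y⟩
  simp only [Set.mem_ofPred_eq, Set.mem_image, coe_sigma, Set.mem_sigma_iff, coe_range,
    Set.mem_Iio, mem_coe, mem_triangle]
  constructor
  · rintro ⟨⟨i, u, m⟩, ⟨hi, hum⟩, hxy⟩
    simp only [runnerInversion, Prod.mk.injEq] at hxy
    obtain ⟨rfl, rfl⟩ := hxy
    dsimp only at hi hum
    refine ⟨(hz i hi _).mpr (by omega), (not_mul_add_add_mul_add_iff hz hi _ _).mpr (by omega),
      lt_add_of_pos_right _ (by positivity), ?_⟩
    rw [add_sub_cancel_left]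
    exact (mul_add_ediv_eq_and_emod_eq _ hrt).2
  · rintro ⟨hx, hy, hxy, hmod⟩
    obtain ⟨i, hi, hxi⟩ := exists_lt_eq_mul_ediv_add x (by omega : 0 < t)
    set a := x / t
    set m := (y - x) / t
    have hyx : y = x + (t * m + r) := by
      have := Int.mul_ediv_add_emod (y - x) t
      rw [hmod] at this
      linarith
    have hm : 0 ≤ m := by
      by_contra
      nlinarith
    have ha : d i ≤ a := (hz i hi a).mp (hxi ▸ hx)
    have hgap := (not_mul_add_add_mul_add_iff hz hi a m).mp (by rwa [← hxi, ← hyx])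
    refine ⟨⟨i, (a - d i).toNat, m.toNat⟩,
      ⟨hi, show (a - d i).toNat + m.toNat < (runnerGap d t r i).toNat by omega⟩, ?_⟩
    simp only [runnerInversion, Prod.mk.injEq, Int.toNat_of_nonneg hm,
      Int.toNat_of_nonneg (sub_nonneg.mpr ha)]
    constructor <;> linarith

theorem ncard_inversions_emod_eq (hz : ∀ i < t, ∀ a : ℤ, Z (t * a + i) ↔ d i ≤ a)
    (hr0 : 0 < r) (hrt : r < t) :
    {p : ℤ × ℤ | Z p.1 ∧ ¬ Z p.2 ∧ p.1 < p.2 ∧ (p.2 - p.1) % t = r}.ncard =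
      ∑ i ∈ range t, ((runnerGap d t r i).toNat + 1).choose 2 := by
  rw [← image_runnerInversion hz hr0 hrt, (injOn_runnerInversion _).ncard_image,
    Set.ncard_coe_finset, card_sigma]
  simp only [card_triangle]

end Abacus

namespace YoungDiagram

variable (μ : YoungDiagram)

-- Positions of the one at column `j` and of the zero at row `r` in the 01-sequence (see `ZOne`).
def onePos (j : ℕ) : ℤ := j - μ.colLen j

def zeroPos (r : ℕ) : ℤ := μ.rowLen r - (r + 1)

variable {μ} {t : ℕ}

theorem mem_iff_onePos_lt_zeroPos {r j : ℕ} : (r, j) ∈ μ ↔ μ.onePos j < μ.zeroPos r := by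
  have hrow := μ.mem_iff_lt_rowLen (i := r) (j := j)
  have hcol := μ.mem_iff_lt_colLen (i := r) (j := j)
  unfold onePos zeroPos
  by_cases h : (r, j) ∈ μ <;> simp only [h, true_iff, false_iff, not_lt] at hrow hcol ⊢ <;> omega

theorem onePos_ne_zeroPos (j r : ℕ) : μ.onePos j ≠ μ.zeroPos r := by
  have hrow := μ.mem_iff_lt_rowLen (i := r) (j := j)
  have hcol := μ.mem_iff_lt_colLen (i := r) (j := j)
  unfold onePos zeroPos
  by_cases h : (r, j) ∈ μ <;> simp only [h, true_iff, false_iff, not_lt] at hrow hcol <;> omega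

theorem hookLen_eq_zeroPos_sub_onePos {r j : ℕ} (h : (r, j) ∈ μ) :
    (hookLen μ r j : ℤ) = μ.zeroPos r - μ.onePos j := by
  have := mem_iff_lt_rowLen.mp h
  have := mem_iff_lt_colLen.mp h
  unfold hookLen onePos zeroPos
  omega

theorem onePos_strictMono : StrictMono μ.onePos :=
  strictMono_nat_of_lt_succ fun j => by
    have := μ.colLen_anti j (j + 1) j.le_succ
    unfold onePos
    push_cast
    omega

theorem zeroPos_strictAnti : StrictAnti μ.zeroPos :=
  strictAnti_nat_of_succ_lt fun r => by
    have := μ.rowLen_anti r (r + 1) r.le_succ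
    unfold zeroPos
    push_cast
    omega

theorem exists_onePos_or_zeroPos_of_lt_onePos (n : ℕ) {x : ℤ} (hx : x < μ.onePos n) :
    (∃ j, μ.onePos j = x) ∨ ∃ r, μ.zeroPos r = x := by
  induction n with
  | zero =>
    right
    refine ⟨(-x - 1).toNat, ?_⟩
    unfold onePos at hx
    have : μ.rowLen (-x - 1).toNat = 0 := by
      by_contra h
      have := mem_iff_lt_colLen.mp (mem_iff_lt_rowLen.mpr (Nat.pos_of_ne_zero h))
      omega
    unfold zeroPos
    omega
  | succ n ih =>
    rcases lt_trichotomy x (μ.onePos n) with hlt | heq | hgt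
    · exact ih hlt
    · exact Or.inl ⟨n, heq.symm⟩
    · -- between two consecutive ones, `x` is the zero ending the row `n - x` of length `n + 1`
      right
      refine ⟨(n - x).toNat, ?_⟩
      unfold onePos at hx hgt
      have hin : ((n - x).toNat, n) ∈ μ := mem_iff_lt_colLen.mpr (by omega)
      have hout : ((n - x).toNat, n + 1) ∉ μ := fun h => by
        have := mem_iff_lt_colLen.mp h
        push_cast at hx
        omega
      have := mem_iff_lt_rowLen.mp hin
      rw [mem_iff_lt_rowLen] at hout
      unfold zeroPos
      omega

theorem zOne_iff_exists_onePos {x : ℤ} : ZOne μ x ↔ ∃ j, μ.onePos j = x := by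
  constructor
  · intro hx
    have hlt : x < μ.onePos (x + μ.colLen 0 + 1).toNat := by
      have := μ.colLen_anti 0 (x + μ.colLen 0 + 1).toNat (Nat.zero_le _)
      unfold onePos
      omega
    exact (exists_onePos_or_zeroPos_of_lt_onePos _ hlt).resolve_right
      fun ⟨r, hr⟩ => hx r hr.symm
  · rintro ⟨j, rfl⟩ r
    exact onePos_ne_zeroPos j r

theorem not_zOne_iff_exists_zeroPos {x : ℤ} : ¬ ZOne μ x ↔ ∃ r, μ.zeroPos r = x := by
  simp only [ZOne, not_forall, not_not, zeroPos, eq_comm]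

theorem card_filter_hookLen_eq_ncard (P : ℤ → Prop) [DecidablePred P] :
    (μ.cells.filter fun c => P (hookLen μ c.1 c.2)).card =
      {p : ℤ × ℤ | ZOne μ p.1 ∧ ¬ ZOne μ p.2 ∧ p.1 < p.2 ∧ P (p.2 - p.1)}.ncard := by
  have hinj : Function.Injective fun c : ℕ × ℕ => (μ.onePos c.2, μ.zeroPos c.1) :=
    fun c c' h => Prod.ext (zeroPos_strictAnti.injective (Prod.ext_iff.mp h).2)
      (onePos_strictMono.injective (Prod.ext_iff.mp h).1)
  rw [← Set.ncard_coe_finset, ← Set.ncard_image_of_injective _ hinj]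
  congr 1
  ext ⟨x, y⟩
  simp only [Set.mem_image, coe_filter, mem_cells, Set.mem_ofPred_eq, Prod.mk.injEq]
  rw [not_zOne_iff_exists_zeroPos, zOne_iff_exists_onePos]
  constructor
  · rintro ⟨⟨r, j⟩, ⟨hmem, hP⟩, rfl, rfl⟩
    exact ⟨⟨j, rfl⟩, ⟨r, rfl⟩, mem_iff_onePos_lt_zeroPos.mp hmem,
      hookLen_eq_zeroPos_sub_onePos hmem ▸ hP⟩
  · rintro ⟨⟨j, rfl⟩, ⟨r, rfl⟩, hlt, hP⟩
    have hmem := mem_iff_onePos_lt_zeroPos.mpr hlt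
    exact ⟨(r, j), ⟨hmem, (hookLen_eq_zeroPos_sub_onePos hmem).symm ▸ hP⟩, rfl, rfl⟩

theorem zOne_add_of_isTCore (hμ : IsTCore t μ) {x : ℤ} (hx : ZOne μ x) : ZOne μ (x + t) := by
  by_contra hy
  obtain ⟨j, rfl⟩ := zOne_iff_exists_onePos.mp hx
  obtain ⟨r, hr⟩ := not_zOne_iff_exists_zeroPos.mp hy
  have hmem : (r, j) ∈ μ := mem_iff_onePos_lt_zeroPos.mpr <|
    lt_of_le_of_ne (by omega) (onePos_ne_zeroPos j r)
  have hhook := hookLen_eq_zeroPos_sub_onePos hmem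
  exact hμ (r, j) ((mem_cells _).mpr hmem) (by rw [show hookLen μ r j = t by omega])

theorem zOne_add_mul_of_isTCore (hμ : IsTCore t μ) {x : ℤ} (hx : ZOne μ x) (n : ℕ) :
    ZOne μ (x + t * n) := by
  induction n with
  | zero => simpa using hx
  | succ n ih => simpa [mul_add, ← add_assoc] using zOne_add_of_isTCore hμ ih

theorem zOne_mul_add_iff_of_isTCore (hμ : IsTCore t μ) {b d : ℕ → ℤ}
    (hb : ∀ i < t, IsLeast {j : ℤ | j % (t : ℤ) = (i : ℤ) ∧ ZOne μ j} (b i))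
    (hd : ∀ i < t, b i = (t : ℤ) * d i + (i : ℤ)) {i : ℕ} (hi : i < t) (a : ℤ) :
    ZOne μ (t * a + i) ↔ d i ≤ a := by
  obtain ⟨⟨-, hbz⟩, hbmin⟩ := hb i hi
  constructor
  · intro hz
    have := hbmin ⟨(mul_add_ediv_eq_and_emod_eq a hi).2, hz⟩
    rw [hd i hi] at this
    exact le_of_mul_le_mul_left (by linarith) (by omega : (0 : ℤ) < t)
  · intro ha
    obtain ⟨n, hn⟩ := Int.eq_ofNat_of_zero_le (sub_nonneg.mpr ha)
    convert zOne_add_mul_of_isTCore hμ hbz n using 1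
    rw [hd i hi, ← hn]
    ring

theorem card_filter_hookLen_mod_eq_of_isTCore (hμ : IsTCore t μ) {b d : ℕ → ℤ}
    (hb : ∀ i < t, IsLeast {j : ℤ | j % (t : ℤ) = (i : ℤ) ∧ ZOne μ j} (b i))
    (hd : ∀ i < t, b i = (t : ℤ) * d i + (i : ℤ)) {r : ℕ} (hr0 : 0 < r) (hrt : r < t) :
    ((μ.cells.filter fun c => hookLen μ c.1 c.2 % t = r).card : ℤ) =
      ∑ i ∈ range t, (((runnerGap d t r i).toNat + 1).choose 2 : ℤ) := by
  have hmod : ∀ n : ℕ, n % t = r ↔ (n : ℤ) % t = r := fun n => by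
    rw [← Int.natCast_mod, Nat.cast_inj]
  rw [filter_congr fun c _ => hmod _, card_filter_hookLen_eq_ncard fun n => n % (t : ℤ) = r,
    ncard_inversions_emod_eq (fun i hi a => zOne_mul_add_iff_of_isTCore hμ hb hd hi a) hr0 hrt,
    Nat.cast_sum]

end YoungDiagram

theorem stmt14_general (t : ℕ) (μ : YoungDiagram) (hμ : IsTCore t μ)
    (b d : ℕ → ℤ)
    (hb : ∀ i < t, IsLeast {j : ℤ | j % (t : ℤ) = (i : ℤ) ∧ ZOne μ j} (b i))
    (hd : ∀ i < t, b i = (t : ℤ) * d i + (i : ℤ))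
    (k : ℕ) (hk1 : 1 ≤ k) (hk2 : k ≤ t - 1) :
    (((μ.cells.filter (fun c => hookLen μ c.1 c.2 % t = k)).card : ℤ)
      + ((μ.cells.filter (fun c => hookLen μ c.1 c.2 % t = (t - k) % t)).card : ℤ))
      = (∑ i ∈ range (t - k), (d i - d (i + k)) * (d i - d (i + k) - 1) / 2)
        + ∑ i ∈ range k, (d i - d (i + t - k)) * (d i - d (i + t - k) - 1) / 2 := by
  set f : ℤ → ℤ := fun n => ((n.toNat + 1).choose 2 : ℕ)
  rw [Nat.mod_eq_of_lt (by omega : t - k < t),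
    YoungDiagram.card_filter_hookLen_mod_eq_of_isTCore hμ hb hd (r := k) (by omega) (by omega),
    YoungDiagram.card_filter_hookLen_mod_eq_of_isTCore hμ hb hd (r := t - k) (by omega) (by omega),
    sum_range_runnerGap f (by omega : k ≤ t), sum_range_runnerGap f (by omega : t - k ≤ t),
    Nat.sub_sub_self (by omega : k ≤ t), add_comm (∑ i ∈ range k, f (d (i + (t - k)) - d i)),
    add_add_add_comm, ← sum_add_distrib, ← sum_add_distrib]
  congr 1 <;> refine sum_congr rfl fun i _ => ?_
  · rw [add_comm k i, ← choose_two_toNat_neg_add, neg_sub]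
  · rw [show t - k + i = i + t - k by omega, show i + (t - k) = i + t - k by omega, add_comm,
      ← choose_two_toNat_neg_add, neg_sub]

theorem stmt14 (t : ℕ) (ht : 1 ≤ t) (μ : YoungDiagram) (hμ : IsTCore t μ)
    (b d : ℕ → ℤ)
    (hb : ∀ i < t, IsLeast {j : ℤ | j % (t : ℤ) = (i : ℤ) ∧ ZOne μ j} (b i))
    (hd : ∀ i < t, b i = (t : ℤ) * d i + (i : ℤ))
    (k : ℕ) (hk1 : 1 ≤ k) (hk2 : k ≤ t - 1) :
    (((μ.cells.filter (fun c => hookLen μ c.1 c.2 % t = k)).card : ℤ)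
      + ((μ.cells.filter (fun c => hookLen μ c.1 c.2 % t = (t - k) % t)).card : ℤ))
      = (∑ i ∈ range (t - k), (d i - d (i + k)) * (d i - d (i + k) - 1) / 2)
        + ∑ i ∈ range k, (d i - d (i + t - k)) * (d i - d (i + t - k) - 1) / 2 :=
  stmt14_general t μ hμ b d hb hd k hk1 hk2
end

section
/- Let t ≥ 1 and μ be a t-core partition with indices b_0,…,b_{t−1} (b_i the least integer ≡ i mod t with z_{μ,b_i} = 1). Let λ have t-core μ and quotients (λ⁰,…,λ^{t−1}), and let λ⁺ be obtained from λ by adding one box □_i of content c to the quotient λ^i. Then the multiset of contents of λ⁺ minus the multiset of contents of λ equals {tc + b_i, tc + b_i − 1, …, tc + b_i − (t−1)}. -/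
open Finset

open PaperDefs

/-!
The 01-sequence of `λ` has its 0's at the positions `zeroPos λ r = λ_r - r - 1`, a strictly
decreasing sequence, and row `r` contains a box of content `k` exactly when `r ≥ -k` and
`zeroPos λ r ≥ k`. Hence the number of boxes of content `k` is the number of 0's at positions
`≥ k`, less the `(-k)⁺` rows `r < -k` whose 0 lies at a position `≥ k` whatever `λ` is.
Adding a box `c` to the quotient `λ^i` moves a 0 of the 01-sequence from position
`a = t(c-1) + b_i` to `a + t`, so this count goes up by one exactly for the `t` contents
`a < k ≤ a + t`.
-/

namespace PaperDefs

def zeroPos (μ : YoungDiagram) (r : ℕ) : ℤ := (μ.rowLen r : ℤ) - (r + 1)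

theorem zeroPos_strictAnti (μ : YoungDiagram) : StrictAnti (zeroPos μ) := by
  refine strictAnti_nat_of_succ_lt fun r => ?_
  have := μ.rowLen_anti r (r + 1) r.le_succ
  unfold zeroPos
  push_cast
  omega

theorem not_zOne_iff_s16 (μ : YoungDiagram) (j : ℤ) : ¬ ZOne μ j ↔ ∃ r, zeroPos μ r = j := by
  simp only [ZOne, zeroPos, not_forall, not_not, eq_comm]

theorem finite_setOf_le_zeroPos (μ : YoungDiagram) (k : ℤ) : {r | k ≤ zeroPos μ r}.Finite := by
  refine (Set.finite_Iio (μ.rowLen 0 - k).toNat).subset fun r (hr : k ≤ zeroPos μ r) => ?_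
  have := μ.rowLen_anti 0 r r.zero_le
  simp only [zeroPos, Set.mem_Iio] at hr ⊢
  omega

theorem setOf_le_not_zOne_eq_image (μ : YoungDiagram) (k : ℤ) :
    {j | k ≤ j ∧ ¬ ZOne μ j} = zeroPos μ '' {r | k ≤ zeroPos μ r} := by
  ext j
  simp only [not_zOne_iff_s16, Set.mem_ofPred_eq, Set.mem_image]
  constructor
  · rintro ⟨hk, r, rfl⟩
    exact ⟨r, hk, rfl⟩
  · rintro ⟨r, hr, rfl⟩
    exact ⟨hr, r, rfl⟩

theorem finite_setOf_le_not_zOne (μ : YoungDiagram) (k : ℤ) :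
    {j | k ≤ j ∧ ¬ ZOne μ j}.Finite := by
  rw [setOf_le_not_zOne_eq_image]
  exact (finite_setOf_le_zeroPos μ k).image _

theorem count_contentsMultiset (μ : YoungDiagram) (k : ℤ) :
    (contentsMultiset μ).count k = {r : ℕ | -k ≤ r ∧ k ≤ zeroPos μ r}.ncard := by
  have hcount : (contentsMultiset μ).count k = (μ.cells.filter (content · = k)).card := by
    rw [contentsMultiset, Multiset.count_map, Finset.card, Finset.filter_val]
    exact congrArg Multiset.card (Multiset.filter_congr fun _ _ => eq_comm)
  have hrows : {r : ℕ | -k ≤ r ∧ k ≤ zeroPos μ r}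
      = Prod.fst '' ((μ.cells.filter (content · = k) : Finset (ℕ × ℕ)) : Set (ℕ × ℕ)) := by
    ext r
    simp only [Finset.coe_filter, Set.mem_image, Set.mem_ofPred_eq, Prod.exists,
      YoungDiagram.mem_cells, YoungDiagram.mem_iff_lt_rowLen]
    simp only [zeroPos, content]
    constructor
    · rintro ⟨hr, hk⟩
      exact ⟨r, (k + r).toNat, ⟨by omega, by omega⟩, rfl⟩
    · rintro ⟨r, j, ⟨hj, rfl⟩, rfl⟩
      omega
  have hinj : Set.InjOn Prod.fst ((μ.cells.filter (content · = k) : Finset (ℕ × ℕ)) : Set (ℕ × ℕ)) := by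
    intro x hx y hy hxy
    simp only [Finset.coe_filter, Set.mem_ofPred_eq] at hx hy
    simp only [content] at hx hy
    exact Prod.ext hxy (by omega)
  rw [hcount, hrows, hinj.ncard_image, Set.ncard_coe_finset]

theorem ncard_setOf_le_zeroPos (μ : YoungDiagram) (k : ℤ) :
    {r | k ≤ zeroPos μ r}.ncard = (-k).toNat + {r : ℕ | -k ≤ r ∧ k ≤ zeroPos μ r}.ncard := by
  have hsplit : {r | k ≤ zeroPos μ r}
      = ↑(Finset.range (-k).toNat) ∪ {r : ℕ | -k ≤ r ∧ k ≤ zeroPos μ r} := by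
    ext r
    simp only [Set.mem_union, Set.mem_ofPred_eq, Finset.coe_range, Set.mem_Iio, zeroPos]
    omega
  have hdisj : Disjoint (↑(Finset.range (-k).toNat) : Set ℕ) {r : ℕ | -k ≤ r ∧ k ≤ zeroPos μ r} :=
    Set.disjoint_left.mpr fun r hr hr' => by
      simp only [Finset.coe_range, Set.mem_Iio, Set.mem_ofPred_eq] at hr hr'
      omega
  rw [hsplit, Set.ncard_union_eq hdisj (Finset.finite_toSet _)
    ((finite_setOf_le_zeroPos μ k).subset fun r hr => hr.2), Set.ncard_coe_finset,
    Finset.card_range]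

theorem count_contentsMultiset_add_toNat (μ : YoungDiagram) (k : ℤ) :
    (contentsMultiset μ).count k + (-k).toNat = {j | k ≤ j ∧ ¬ ZOne μ j}.ncard := by
  rw [setOf_le_not_zOne_eq_image, (zeroPos_strictAnti μ).injective.injOn.ncard_image,
    ncard_setOf_le_zeroPos, count_contentsMultiset, add_comm]

theorem ncard_setOf_le_and_eq (k a : ℤ) :
    {j | k ≤ j ∧ j = a}.ncard = if k ≤ a then 1 else 0 := by
  split_ifs with h
  · exact Set.ncard_eq_one.mpr ⟨a, Set.ext fun j => by
      simp only [Set.mem_ofPred_eq, Set.mem_singleton_iff]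
      omega⟩
  · rw [Set.ncard_eq_zero ((Set.finite_singleton a).subset fun j hj => hj.2)]
    exact Set.eq_empty_of_forall_notMem fun j hj => h (hj.2 ▸ hj.1)

theorem contentsMultiset_eq_add_Ioc {lam lamp : YoungDiagram} {a b : ℤ} (hab : a ≤ b)
    (ha : ¬ ZOne lam a) (hb : ZOne lam b)
    (hflip : ∀ j : ℤ, ZOne lamp j ↔ (j = a ∨ (j ≠ b ∧ ZOne lam j))) :
    contentsMultiset lamp = contentsMultiset lam + Multiset.Ioc a b := by
  ext k
  have hunion : {j | k ≤ j ∧ ¬ ZOne lamp j} ∪ {j | k ≤ j ∧ j = a}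
      = {j | k ≤ j ∧ ¬ ZOne lam j} ∪ {j | k ≤ j ∧ j = b} := by
    ext j
    simp only [Set.mem_union, Set.mem_ofPred_eq, hflip]
    by_cases hja : j = a
    · subst hja
      tauto
    · by_cases hjb : j = b
      · subst hjb
        tauto
      · tauto
  have hdisj : ∀ (μ : YoungDiagram) (x : ℤ), ZOne μ x →
      Disjoint {j | k ≤ j ∧ ¬ ZOne μ j} {j | k ≤ j ∧ j = x} :=
    fun μ x hx => Set.disjoint_left.mpr fun j hj hj' => hj.2 (hj'.2 ▸ hx)
  have hfin : ∀ x : ℤ, {j | k ≤ j ∧ j = x}.Finite :=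
    fun x => (Set.finite_singleton x).subset fun j hj => hj.2
  have hcard := congrArg Set.ncard hunion
  rw [Set.ncard_union_eq (hdisj lamp a ((hflip a).mpr (Or.inl rfl)))
      (finite_setOf_le_not_zOne lamp k) (hfin a),
    Set.ncard_union_eq (hdisj lam b hb) (finite_setOf_le_not_zOne lam k) (hfin b),
    ← count_contentsMultiset_add_toNat, ← count_contentsMultiset_add_toNat,
    ncard_setOf_le_and_eq, ncard_setOf_le_and_eq] at hcard
  rw [Multiset.count_add]
  by_cases hk : a < k ∧ k ≤ b
  · rw [Multiset.count_eq_one_of_mem Multiset.nodup_Ioc (Multiset.mem_Ioc.mpr hk)]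
    split_ifs at hcard <;> omega
  · rw [Multiset.count_eq_zero_of_notMem (fun h => hk (Multiset.mem_Ioc.mp h))]
    split_ifs at hcard <;> omega

theorem Ioc_sub_eq_map_range (t : ℕ) (T : ℤ) :
    Multiset.Ioc (T - t) T = (Multiset.range t).map (fun j => T - (j : ℤ)) := by
  simp only [Multiset.pure_def, Multiset.bind_def, Multiset.bind_singleton, Multiset.map_map,
    Function.comp_apply]
  refine (Multiset.Nodup.ext Multiset.nodup_Ioc
    ((Multiset.nodup_range t).map fun x y h => by simpa using h)).mpr fun k => ?_
  simp only [Multiset.mem_Ioc, Multiset.mem_map, Multiset.mem_range]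
  constructor
  · rintro ⟨h1, h2⟩
    exact ⟨(T - k).toNat, by omega, by omega⟩
  · rintro ⟨j, hj, rfl⟩
    omega

end PaperDefs

theorem stmt16_general (t : ℕ) (lam lamp : YoungDiagram) (bi : ℤ)
    (c : ℤ)
    (hc0 : ¬ ZOne lam ((c - 1) * (t : ℤ) + bi))
    (hc1 : ZOne lam (c * (t : ℤ) + bi))
    (hflip : ∀ j : ℤ, ZOne lamp j ↔
      (j = (c - 1) * (t : ℤ) + bi ∨ (j ≠ c * (t : ℤ) + bi ∧ ZOne lam j))) :
    contentsMultiset lamp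
      = contentsMultiset lam + (Multiset.range t).map (fun j => (t : ℤ) * c + bi - (j : ℤ)) := by
  have ha : (c - 1) * (t : ℤ) + bi = (t * c + bi) - t := by ring
  have hb : c * (t : ℤ) + bi = t * c + bi := by ring
  rw [ha] at hc0 hflip
  rw [hb] at hc1 hflip
  rw [contentsMultiset_eq_add_Ioc (by omega) hc0 hc1 hflip, Ioc_sub_eq_map_range]

theorem stmt16 (t : ℕ) (ht : 1 ≤ t) (μ lam lamp : YoungDiagram) (hμ : IsTCore t μ)
    (hcore : GEt t μ lam) (i : ℕ) (hi : i < t) (bi : ℤ)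
    (hb : IsLeast {j : ℤ | j % (t : ℤ) = (i : ℤ) ∧ ZOne μ j} bi)
    (c : ℤ)
    (hc0 : ¬ ZOne lam ((c - 1) * (t : ℤ) + bi))
    (hc1 : ZOne lam (c * (t : ℤ) + bi))
    (hflip : ∀ j : ℤ, ZOne lamp j ↔
      (j = (c - 1) * (t : ℤ) + bi ∨ (j ≠ c * (t : ℤ) + bi ∧ ZOne lam j))) :
    contentsMultiset lamp
      = contentsMultiset lam + (Multiset.range t).map (fun j => (t : ℤ) * c + bi - (j : ℤ)) :=
  stmt16_general t lam lamp bi c hc0 hc1 hflip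
end
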